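/- arXiv:math/0105083 — 3 statements merged into one kernel-verified Lean document; each statement's English description precedes it below -/
import Mathlib

section
/- If a finitely generated group Γ admits a surjective homomorphism onto a free nonabelian group (i.e., Γ is large), then Γ has uniform exponential growth. -/
open Filter

/-- The ball of radius `n` in `Γ` with respect to the generating set `S`:
elements expressible as products of at most `n` elements of `S ∪ S⁻¹`. -/
def wordBall {G : Type*} [Group G] (S : Set G) (n : ℕ) : Set G :=
  {g | ∃ l : List G, (∀ x ∈ l, x ∈ S ∪ S⁻¹) ∧ l.length ≤ n ∧ l.prod = g}

/-- The word length `λ_S(g)`. -/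
noncomputable def wordLength {G : Type*} [Group G] (S : Set G) (g : G) : ℕ :=
  sInf {n | g ∈ wordBall S n}

/-- The growth function `β_n(S,Γ)`. -/
noncomputable def growthFn {G : Type*} [Group G] (S : Set G) (n : ℕ) : ℕ :=
  Nat.card (wordBall S n)

/-- The exponential growth rate `β(S,Γ) = lim β_n(S,Γ)^{1/n}`. -/
noncomputable def growthRate {G : Type*} [Group G] (S : Set G) : ℝ :=
  Filter.limsup (fun n : ℕ => (growthFn S n : ℝ) ^ (1 / (n : ℝ))) atTop

/-- The minimal growth rate `β(Γ) = inf_S β(S,Γ)` over finite generating sets. -/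
noncomputable def minGrowth (G : Type*) [Group G] : ℝ :=
  ⨅ S : {S : Finset G // Subgroup.closure (S : Set G) = ⊤},
    growthRate ((S : Finset G) : Set G)

namespace UEG
open Equiv Function

variable {α : Type*} [DecidableEq α]

/-- swap (j, j+1) in `Fin (m+1)` if `j < m`, else identity. -/
def swapF (m : ℕ) (j : ℕ) : Equiv.Perm (Fin (m+1)) :=
  if h : j < m then Equiv.swap ⟨j, by omega⟩ ⟨j+1, by omega⟩ else 1

def chain (m : ℕ) (l : List ℕ) : Equiv.Perm (Fin (m+1)) := (l.map (swapF m)).prod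

lemma chain_fix {m : ℕ} {l : List ℕ} {v : Fin (m+1)}
    (hv : ∀ j ∈ l, (v : ℕ) ≠ j ∧ (v : ℕ) ≠ j + 1) :
    chain m l v = v := by
  induction l with
  | nil => rfl
  | cons a t ih =>
    have h1 : chain m t v = v := ih (fun j hj => hv j (List.mem_cons_of_mem _ hj))
    show (swapF m a * chain m t) v = v
    rw [Equiv.Perm.mul_apply, h1]
    unfold swapF
    split
    · refine Equiv.swap_apply_of_ne_of_ne ?_ ?_
      · exact fun hh => (hv a (List.mem_cons_self)).1 (by rw [hh])
      · exact fun hh => (hv a (List.mem_cons_self)).2 (by rw [hh])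
    · rfl

lemma chain_maps {m : ℕ} {l : List ℕ} (hs : l.Pairwise (· < ·))
    {j : ℕ} (hj : j ∈ l) (hjm : j < m) :
    chain m l ⟨j, by omega⟩ = ⟨j + 1, by omega⟩ := by
  induction l with
  | nil => cases hj
  | cons a t ih =>
    rcases List.mem_cons.1 hj with rfl | hjt
    · have h1 : chain m t (⟨j, by omega⟩ : Fin (m+1)) = ⟨j, by omega⟩ := by
        apply chain_fix
        intro b hb
        have hjb : j < b := (List.pairwise_cons.1 hs).1 b hb
        simp only [Fin.val_mk]
        omega
      show (swapF m j * chain m t) _ = _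
      rw [Equiv.Perm.mul_apply, h1, swapF, dif_pos hjm, Equiv.swap_apply_left]
    · have ha : a < j := (List.pairwise_cons.1 hs).1 j hjt
      have h1 := ih (List.pairwise_cons.1 hs).2 hjt
      show (swapF m a * chain m t) _ = _
      rw [Equiv.Perm.mul_apply, h1]
      unfold swapF
      split
      · refine Equiv.swap_apply_of_ne_of_ne ?_ ?_ <;>
          · intro hh
            have := congrArg Fin.val hh
            simp at this
            omega
      · rfl

/-- positions where the letter `(x, b)` occurs in `r`. -/
def listP (r : List (α × Bool)) (x : α) (b : Bool) : List ℕ :=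
  (List.range r.length).filter (fun j => decide (r[j]? = some (x, b)))

lemma mem_listP {r : List (α × Bool)} {x : α} {b : Bool} {j : ℕ} :
    j ∈ listP r x b ↔ ∃ h : j < r.length, r[j] = (x, b) := by
  simp only [listP, List.mem_filter, List.mem_range, decide_eq_true_eq]
  constructor
  · rintro ⟨h1, h2⟩
    exact ⟨h1, by rw [List.getElem?_eq_getElem h1] at h2; exact Option.some_injective _ h2⟩
  · rintro ⟨h1, h2⟩
    exact ⟨h1, by rw [List.getElem?_eq_getElem h1, h2]⟩

lemma listP_sorted (r : List (α × Bool)) (x : α) (b : Bool) :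
    (listP r x b).Pairwise (· < ·) :=
  List.Pairwise.sublist List.filter_sublist List.pairwise_lt_range

def sigma (r : List (α × Bool)) (x : α) : Equiv.Perm (Fin (r.length + 1)) :=
  chain r.length (listP r x true) * (chain r.length (listP r x false))⁻¹

end UEG

namespace UEG2
open UEG

variable {α : Type*} [DecidableEq α]

lemma sigma_spec {r : List (α × Bool)}
    (hred : ∀ (j : ℕ) (h : j + 1 < r.length),
      (r[j]'(by omega)).1 = (r[j+1]'h).1 → (r[j]'(by omega)).2 = (r[j+1]'h).2)
    {j : ℕ} (hj : j < r.length) {x : α} {b : Bool} (hr : r[j]'hj = (x, b)) :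
    (cond b (sigma r x) (sigma r x)⁻¹) ⟨j, by omega⟩ = ⟨j + 1, by omega⟩ := by
  have hmemA : ∀ {b' : Bool}, r[j]'hj = (x, b') → j ∈ listP r x b' :=
    fun h => mem_listP.2 ⟨hj, h⟩
  have hfix : ∀ (b' : Bool), r[j]'hj = (x, b') →
      chain r.length (listP r x (!b')) ⟨j, by omega⟩ = ⟨j, by omega⟩ := by
    intro b' hb'
    apply chain_fix
    intro a ha
    obtain ⟨ha1, ha2⟩ := mem_listP.1 ha
    simp only [Fin.val_mk]
    constructor
    · intro hja
      subst hja
      rw [hb'] at ha2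
      simp [Prod.ext_iff] at ha2
    · intro hja
      subst hja
      have h2 : a + 1 < r.length := hj
      have h3 := hred a h2 (by rw [ha2, hb'])
      rw [ha2, hb'] at h3
      simp at h3
  cases b with
  | false =>
    show (sigma r x)⁻¹ _ = _
    rw [sigma, mul_inv_rev, inv_inv, Equiv.Perm.mul_apply]
    have h1 : (chain r.length (listP r x true))⁻¹ (⟨j, by omega⟩ : Fin (r.length + 1))
        = ⟨j, by omega⟩ := by
      rw [Equiv.Perm.inv_eq_iff_eq]
      exact (hfix false hr).symm
    rw [h1]
    exact chain_maps (listP_sorted r x false) (hmemA hr) hj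
  | true =>
    show (sigma r x) _ = _
    rw [sigma, Equiv.Perm.mul_apply]
    have h1 : (chain r.length (listP r x false))⁻¹ (⟨j, by omega⟩ : Fin (r.length + 1))
        = ⟨j, by omega⟩ := by
      rw [Equiv.Perm.inv_eq_iff_eq]
      exact (hfix true hr).symm
    rw [h1]
    exact chain_maps (listP_sorted r x true) (hmemA hr) hj

lemma key_lemma {r : List (α × Bool)}
    (hred : ∀ (j : ℕ) (h : j + 1 < r.length),
      (r[j]'(by omega)).1 = (r[j+1]'h).1 → (r[j]'(by omega)).2 = (r[j+1]'h).2) :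
    ∀ (w₂ w₁ : List (α × Bool)) (h : r = w₂.reverse ++ w₁),
    ((w₂.map fun p => cond p.2 (sigma r p.1) (sigma r p.1)⁻¹).prod) ⟨0, by omega⟩ =
      ⟨w₂.length, by rw [h, List.length_append, List.length_reverse]; omega⟩ := by
  intro w₂
  induction w₂ with
  | nil => intro w₁ h; simp
  | cons u t ih =>
    intro w₁ h
    have h' : r = t.reverse ++ ([u] ++ w₁) := by
      rw [h, List.reverse_cons, List.append_assoc]
    rw [List.map_cons, List.prod_cons, Equiv.Perm.mul_apply, ih ([u] ++ w₁) h']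
    have hjlt : t.length < r.length := by
      rw [h', List.length_append, List.length_reverse, List.length_append]
      simp
    have hru : r[t.length]'hjlt = u := by
      have h2 := List.getElem_of_eq h' hjlt
      rw [h2, List.getElem_append_right (by simp)]
      simp
    have := sigma_spec hred hjlt (x := u.1) (b := u.2) (by rw [hru])
    simpa using this

theorem exists_perm_hom (g : FreeGroup α) (hg : g ≠ 1) :
    ∃ (m : ℕ) (φ : FreeGroup α →* Equiv.Perm (Fin (m + 1))), φ g ≠ 1 := by
  have hwred : FreeGroup.reduce g.toWord = g.toWord := FreeGroup.reduce_toWord g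
  have hwne : g.toWord ≠ [] := fun h => hg (FreeGroup.toWord_eq_nil_iff.1 h)
  set r : List (α × Bool) := g.toWord.reverse with hrdef
  have hrlen : r.length = g.toWord.length := List.length_reverse
  have hred : ∀ (j : ℕ) (h : j + 1 < r.length),
      (r[j]'(by omega)).1 = (r[j+1]'h).1 → (r[j]'(by omega)).2 = (r[j+1]'h).2 := by
    intro j h h1
    by_contra h2
    have hn : g.toWord.length = r.length := hrlen.symm
    set wl := g.toWord with hwl
    have hj1 : r[j]'(by omega) = wl[wl.length - 1 - j]'(by omega) := by
      have hx := List.getElem_of_eq hrdef (i := j) (by omega)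
      rw [hx]
      simp [List.getElem_reverse]
    have hj2 : r[j+1]'h = wl[wl.length - 1 - (j+1)]'(by omega) := by
      have hx := List.getElem_of_eq hrdef (i := j+1) (by omega)
      rw [hx]
      simp [List.getElem_reverse]
    set i := wl.length - 1 - (j+1) with hidef
    have hii : i + 1 = wl.length - 1 - j := by omega
    have hilt : i + 1 < wl.length := by omega
    -- pattern: wl[i], wl[i+1] cancel
    have e1 : wl[i].1 = wl[i+1].1 := by
      have := h1
      rw [hj1, hj2] at this
      simp_rw [hii]
      exact this.symm
    have e2 : wl[i+1].2 = !(wl[i].2) := by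
      apply Bool.eq_not_of_ne
      intro hc
      apply h2
      rw [hj1, hj2]
      simp_rw [← hii]
      exact hc
    have hsplit : wl = wl.take i ++ (wl[i].1, wl[i].2) :: ((wl[i].1, !wl[i].2)) :: wl.drop (i+2) := by
      conv_lhs => rw [← List.take_append_drop i wl]
      congr 1
      rw [List.drop_eq_getElem_cons (by omega)]
      congr 1
      rw [List.drop_eq_getElem_cons (h := hilt)]
      congr 1
      rw [e1, ← e2]
    exact FreeGroup.reduce.not (hwred.trans hsplit)
  refine ⟨r.length, FreeGroup.lift (sigma r), ?_⟩
  intro hone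
  have hg' : FreeGroup.lift (sigma r) g
      = ((g.toWord.map fun p => cond p.2 (sigma r p.1) (sigma r p.1)⁻¹)).prod := by
    conv_lhs => rw [← FreeGroup.mk_toWord (x := g)]
    exact FreeGroup.lift_mk
  have hkey := key_lemma hred g.toWord [] (by simp [hrdef])
  rw [hone] at hg'
  have : ((1 : Equiv.Perm (Fin (r.length + 1)))) ⟨0, by omega⟩
      = ⟨g.toWord.length, by omega⟩ := by
    rw [hg']; exact hkey
  simp only [Equiv.Perm.one_apply] at this
  have := congrArg Fin.val this
  simp only [Fin.val_mk] at this
  exact hwne (List.length_eq_zero_iff.1 this.symm)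

end UEG2

namespace UEG3
open Function

theorem freeGroupBool_hopf (e : FreeGroup Bool →* FreeGroup Bool) (he : Surjective e) :
    Injective e := by
  rw [injective_iff_map_eq_one]
  intro z hz
  by_contra hzne
  obtain ⟨m, φ, hφ⟩ := UEG2.exists_perm_hom z hzne
  have hfin : Finite (FreeGroup Bool →* Equiv.Perm (Fin (m+1))) := by
    apply Finite.of_injective (fun h => (fun b : Bool => h (FreeGroup.of b)))
    intro h1 h2 h12
    exact FreeGroup.ext_hom _ _ fun a => congrFun h12 a
  have hTinj : Injective (fun h : FreeGroup Bool →* Equiv.Perm (Fin (m+1)) => h.comp e) := by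
    intro h1 h2 h12
    apply MonoidHom.ext
    intro y
    obtain ⟨x, rfl⟩ := he y
    exact DFunLike.congr_fun h12 x
  obtain ⟨θ, hθ⟩ := (Finite.injective_iff_surjective.1 hTinj) φ
  have hc : φ z = 1 := by
    rw [← hθ]
    show θ (e z) = 1
    rw [hz, map_one]
  exact hφ hc

theorem lift_injective_of_not_commute {n : ℕ} {s t : FreeGroup (Fin n)}
    (hst : s * t ≠ t * s) :
    Injective (FreeGroup.lift (fun b : Bool => cond b s t)) := by
  set ψ := FreeGroup.lift (fun b : Bool => cond b s t) with hψ
  set H := ψ.range with hH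
  let θ : ↥H ≃* FreeGroup (IsFreeGroup.Generators ↥H) := IsFreeGroup.toFreeGroup ↥H
  set B := IsFreeGroup.Generators ↥H with hB
  have hsH : s ∈ H := ⟨FreeGroup.of true, by simp [hψ]⟩
  have htH : t ∈ H := ⟨FreeGroup.of false, by simp [hψ]⟩
  have hBnontriv : Nontrivial B := by
    by_contra hBsub
    rw [not_nontrivial_iff_subsingleton] at hBsub
    have hcomm : ∀ x y : FreeGroup B, Commute x y := by
      intro x y
      have hx : x ∈ Subgroup.closure (Set.range (FreeGroup.of : B → FreeGroup B)) := by
        rw [FreeGroup.closure_range_of]; trivial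
      have hy : y ∈ Subgroup.closure (Set.range (FreeGroup.of : B → FreeGroup B)) := by
        rw [FreeGroup.closure_range_of]; trivial
      refine Subgroup.closure_induction₂
        (p := fun a b _ _ => Commute a b) ?_ ?_ ?_ ?_ ?_ ?_ ?_ hx hy
      · rintro _ _ ⟨a, rfl⟩ ⟨b, rfl⟩
        rw [Subsingleton.elim a b]
      · exact fun a _ => Commute.one_left a
      · exact fun a _ => Commute.one_right a
      · exact fun a b c _ _ _ h1 h2 => h1.mul_left h2
      · exact fun a b c _ _ _ h1 h2 => h1.mul_right h2
      · exact fun a b _ _ h => h.inv_left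
      · exact fun a b _ _ h => h.inv_right
    apply hst
    have h1 : (⟨s, hsH⟩ : H) * ⟨t, htH⟩ = ⟨t, htH⟩ * ⟨s, hsH⟩ := by
      apply θ.injective
      rw [map_mul, map_mul]
      exact hcomm _ _
    exact congrArg Subtype.val h1
  obtain ⟨b₁, b₂, hb⟩ := hBnontriv
  letI : DecidableEq B := Classical.decEq B
  set χ : FreeGroup B →* FreeGroup Bool :=
    FreeGroup.lift (fun b => if b = b₁ then FreeGroup.of true
      else if b = b₂ then FreeGroup.of false else 1) with hχ
  have hχsurj : Surjective χ := by
    intro y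
    induction y using FreeGroup.induction_on with
    | C1 => exact ⟨1, map_one _⟩
    | of x =>
      cases x with
      | true => exact ⟨FreeGroup.of b₁, by simp [hχ]⟩
      | false => exact ⟨FreeGroup.of b₂, by simp [hχ, hb.symm, hb]⟩
    | inv_of x ih =>
      obtain ⟨z, hz⟩ := ih
      exact ⟨z⁻¹, by rw [map_inv, hz]⟩
    | mul x y ihx ihy =>
      obtain ⟨z1, hz1⟩ := ihx
      obtain ⟨z2, hz2⟩ := ihy
      exact ⟨z1 * z2, by rw [map_mul, hz1, hz2]⟩
  set π : FreeGroup Bool →* ↥H := ψ.rangeRestrict with hπdef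
  have hπsurj : Surjective π := ψ.rangeRestrict_surjective
  set e : FreeGroup Bool →* FreeGroup Bool := χ.comp ((θ : ↥H →* FreeGroup B).comp π) with he
  have hesurj : Surjective e := by
    rw [he]
    simp only [MonoidHom.coe_comp]
    exact hχsurj.comp (θ.surjective.comp hπsurj)
  have heinj := freeGroupBool_hopf e hesurj
  have hπinj : Injective π := by
    intro a b hab
    apply heinj
    rw [he]
    simp only [MonoidHom.coe_comp, Function.comp_apply, hab]
  intro a b hab
  apply hπinj
  exact Subtype.ext (by rw [MonoidHom.coe_rangeRestrict, MonoidHom.coe_rangeRestrict]; exact hab)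

end UEG3

namespace UEG4
open Function

variable {G : Type*} [Group G]

lemma wordBall_subset_range (S : Finset G) (n : ℕ) :
    wordBall (S : Set G) n ⊆
      Set.range (fun f : Fin n → ↥(insert (1:G) ((S : Set G) ∪ (S : Set G)⁻¹)) =>
        (List.ofFn (fun i => ((f i : G)))).prod) := by
  rintro g ⟨l, hl, hlen, rfl⟩
  set T : Set G := insert (1:G) ((S : Set G) ∪ (S : Set G)⁻¹) with hT
  set l' := l ++ List.replicate (n - l.length) (1:G) with hl'
  have hlen' : l'.length = n := by
    rw [hl', List.length_append, List.length_replicate]; omega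
  have hmem : ∀ x ∈ l', x ∈ T := by
    intro x hx
    rcases List.mem_append.1 hx with h | h
    · exact Set.mem_insert_iff.2 (Or.inr (hl x h))
    · rw [List.eq_of_mem_replicate h]; exact Set.mem_insert _ _
  refine ⟨fun i => ⟨l'[(i : ℕ)]'(by rw [hlen']; exact i.isLt),
    hmem _ (List.getElem_mem _)⟩, ?_⟩
  show (List.ofFn _).prod = l.prod
  have heq : List.ofFn (fun i : Fin n => l'[(i:ℕ)]'(by rw [hlen']; exact i.isLt)) = l' := by
    apply List.ext_getElem (by simp [hlen'])
    intro i h1 h2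
    simp
  rw [heq, hl', List.prod_append, List.prod_replicate, one_pow, mul_one]

lemma wordBall_finite (S : Finset G) (n : ℕ) : (wordBall (S : Set G) n).Finite := by
  have hT : (insert (1:G) ((S : Set G) ∪ (S : Set G)⁻¹)).Finite :=
    (S.finite_toSet.union S.finite_toSet.inv).insert 1
  haveI := hT.to_subtype
  exact (Set.finite_range _).subset (wordBall_subset_range S n)

lemma growthFn_le (S : Finset G) (n : ℕ) :
    growthFn (S : Set G) n
      ≤ (Nat.card ↥(insert (1:G) ((S : Set G) ∪ (S : Set G)⁻¹)))^n := by
  have hT : (insert (1:G) ((S : Set G) ∪ (S : Set G)⁻¹)).Finite :=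
    (S.finite_toSet.union S.finite_toSet.inv).insert 1
  haveI := hT.to_subtype
  calc growthFn (S : Set G) n
      ≤ Nat.card (Set.range (fun f : Fin n → ↥(insert (1:G) ((S : Set G) ∪ (S : Set G)⁻¹)) =>
          (List.ofFn (fun i => ((f i : G)))).prod)) :=
        Nat.card_mono (Set.finite_range _) (wordBall_subset_range S n)
    _ ≤ Nat.card (Fin n → ↥(insert (1:G) ((S : Set G) ∪ (S : Set G)⁻¹))) :=
        Nat.card_le_card_of_surjective (Set.rangeFactorization _)
          Set.rangeFactorization_surjective
    _ = (Nat.card ↥(insert (1:G) ((S : Set G) ∪ (S : Set G)⁻¹)))^n := by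
        rw [Nat.card_fun]
        simp

lemma card_T_pos (S : Finset G) :
    1 ≤ Nat.card ↥(insert (1:G) ((S : Set G) ∪ (S : Set G)⁻¹)) := by
  have hT : (insert (1:G) ((S : Set G) ∪ (S : Set G)⁻¹)).Finite :=
    (S.finite_toSet.union S.finite_toSet.inv).insert 1
  haveI := hT.to_subtype
  have : Nonempty ↥(insert (1:G) ((S : Set G) ∪ (S : Set G)⁻¹)) :=
    ⟨⟨1, Set.mem_insert _ _⟩⟩
  exact Nat.one_le_iff_ne_zero.2 (Nat.card_ne_zero.2 ⟨this, inferInstance⟩)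

end UEG4

namespace UEG5
open Function Filter

lemma reduce_pos {α : Type*} [DecidableEq α] (L : List (α × Bool))
    (h : ∀ x ∈ L, x.2 = true) : FreeGroup.reduce L = L := by
  induction L with
  | nil => rfl
  | cons a t ih =>
    rw [FreeGroup.reduce.cons, ih (fun x hx => h x (List.mem_cons_of_mem _ hx))]
    cases t with
    | nil => rfl
    | cons b t2 =>
      show (if a.1 = b.1 ∧ a.2 = !b.2 then t2 else a :: b :: t2) = a :: b :: t2
      rw [if_neg]
      rintro ⟨h1, h2⟩
      rw [h a (List.mem_cons_self), h b (List.mem_cons_of_mem _ (List.mem_cons_self))]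
        at h2
      simp at h2

variable {G : Type*} [Group G]

lemma growthFn_lower (S : Finset G) {s t : G} (hs : s ∈ S) (ht : t ∈ S)
    (hinj : ∀ m : ℕ, Injective
      (fun f : Fin m → Bool => (List.ofFn fun i => cond (f i) s t).prod))
    (m : ℕ) : 2^m ≤ growthFn (S : Set G) m := by
  haveI := (UEG4.wordBall_finite S m).to_subtype
  have hmem : ∀ f : Fin m → Bool,
      (List.ofFn fun i => cond (f i) s t).prod ∈ wordBall (S : Set G) m := by
    intro f
    refine ⟨_, ?_, by simp, rfl⟩
    intro x hx
    rw [List.mem_ofFn] at hx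
    obtain ⟨i, rfl⟩ := hx
    have hm : (bif f i then s else t) ∈ (S : Set G) := by
      cases f i
      · exact ht
      · exact hs
    exact Or.inl hm
  have h2 : Injective (fun f : Fin m → Bool =>
      (⟨(List.ofFn fun i => cond (f i) s t).prod, hmem f⟩ : ↥(wordBall (S : Set G) m))) :=
    fun a b hab => hinj m (congrArg Subtype.val hab)
  calc (2:ℕ)^m = Nat.card (Fin m → Bool) := by rw [Nat.card_fun]; simp
    _ ≤ Nat.card (wordBall (S : Set G) m) := Nat.card_le_card_of_injective _ h2

lemma two_le_growthRate (S : Finset G)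
    (hg : ∀ m : ℕ, 2^m ≤ growthFn (S : Set G) m) :
    2 ≤ growthRate (S : Set G) := by
  set C := Nat.card ↥(insert (1:G) ((S : Set G) ∪ (S : Set G)⁻¹)) with hC
  have hC1 : 1 ≤ C := UEG4.card_T_pos S
  apply Filter.le_limsup_of_frequently_le
  · apply Filter.Eventually.frequently
    filter_upwards [Filter.eventually_ge_atTop 1] with n hn
    have hn0 : (n:ℝ) ≠ 0 := by positivity
    have h1 : ((2:ℝ))^(n:ℝ) ≤ (growthFn (S : Set G) n : ℝ) := by
      rw [Real.rpow_natCast]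
      exact_mod_cast hg n
    have h2 : ((2:ℝ)^(n:ℝ))^(1/(n:ℝ)) ≤ (growthFn (S : Set G) n : ℝ)^(1/(n:ℝ)) :=
      Real.rpow_le_rpow (by positivity) h1 (by positivity)
    calc (2:ℝ) = ((2:ℝ)^(n:ℝ))^(1/(n:ℝ)) := by
          rw [← Real.rpow_mul (by norm_num), mul_one_div, div_self hn0, Real.rpow_one]
      _ ≤ _ := h2
  · apply Filter.isBoundedUnder_of
    refine ⟨(C : ℝ), fun n => ?_⟩
    rcases Nat.eq_zero_or_pos n with rfl | hn
    · simp only [Nat.cast_zero, div_zero, Real.rpow_zero]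
      exact_mod_cast hC1
    · have hn0 : (n:ℝ) ≠ 0 := by positivity
      have h1 : (growthFn (S : Set G) n : ℝ) ≤ ((C:ℝ))^(n:ℝ) := by
        rw [Real.rpow_natCast]
        exact_mod_cast UEG4.growthFn_le S n
      have h2 : (growthFn (S : Set G) n : ℝ)^(1/(n:ℝ)) ≤ (((C:ℝ))^(n:ℝ))^(1/(n:ℝ)) :=
        Real.rpow_le_rpow (by positivity) h1 (by positivity)
      calc (growthFn (S : Set G) n : ℝ)^(1/(n:ℝ)) ≤ (((C:ℝ))^(n:ℝ))^(1/(n:ℝ)) := h2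
        _ = (C:ℝ) := by
          rw [← Real.rpow_mul (by positivity), mul_one_div, div_self hn0, Real.rpow_one]

lemma exists_noncomm (n : ℕ) (hn : 2 ≤ n) (P : Set (FreeGroup (Fin n)))
    (hP : Subgroup.closure P = ⊤) : ∃ s' ∈ P, ∃ t' ∈ P, s' * t' ≠ t' * s' := by
  by_contra h
  push_neg at h
  have hcomm : ∀ x y : FreeGroup (Fin n), x * y = y * x := by
    intro x y
    have hx : x ∈ Subgroup.closure P := by rw [hP]; trivial
    have hy : y ∈ Subgroup.closure P := by rw [hP]; trivial
    refine Subgroup.closure_induction₂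
      (p := fun a b _ _ => Commute a b) ?_ ?_ ?_ ?_ ?_ ?_ ?_ hx hy
    · exact fun a b ha hb => h a ha b hb
    · exact fun a _ => Commute.one_left a
    · exact fun a _ => Commute.one_right a
    · exact fun a b c _ _ _ h1 h2 => h1.mul_left h2
    · exact fun a b c _ _ _ h1 h2 => h1.mul_right h2
    · exact fun a b _ _ hc => hc.inv_left
    · exact fun a b _ _ hc => hc.inv_right
  have h01 : FreeGroup.of (⟨0, by omega⟩ : Fin n) * FreeGroup.of (⟨1, by omega⟩ : Fin n)
      ≠ FreeGroup.of (⟨1, by omega⟩ : Fin n) * FreeGroup.of (⟨0, by omega⟩ : Fin n) := by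
    intro hc
    have hne : (⟨1, by omega⟩ : Fin n) ≠ ⟨0, by omega⟩ := by
      intro hcc
      have := congrArg Fin.val hcc
      simp at this
    have h3 := congrArg (FreeGroup.lift (fun x : Fin n =>
      if x = ⟨0, by omega⟩ then (Equiv.swap 0 1 : Equiv.Perm (Fin 3)) else Equiv.swap 1 2)) hc
    simp only [map_mul, FreeGroup.lift_apply_of, if_pos rfl, if_neg hne] at h3
    exact absurd h3 (by decide)
  exact h01 (hcomm _ _)

end UEG5

theorem large_implies_uniform_growth {G : Type*} [Group G] [Group.FG G]
    (n : ℕ) (hn : 2 ≤ n) (φ : G →* FreeGroup (Fin n))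
    (hφ : Function.Surjective φ) :
    1 < minGrowth G := by
  have hne : Nonempty {S : Finset G // Subgroup.closure (S : Set G) = ⊤} := by
    obtain ⟨Sset, hSc, hSfin⟩ := Group.fg_iff.1 ‹Group.FG G›
    exact ⟨⟨hSfin.toFinset, by rw [Set.Finite.coe_toFinset]; exact hSc⟩⟩
  have hmain : ∀ S : {S : Finset G // Subgroup.closure (S : Set G) = ⊤},
      2 ≤ growthRate (((S : Finset G) : Finset G) : Set G) := by
    rintro ⟨S, hS⟩
    have hgen : Subgroup.closure (φ '' (S : Set G)) = ⊤ := by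
      rw [← MonoidHom.map_closure, hS, Subgroup.map_top_of_surjective φ hφ]
    obtain ⟨s', hs', t', ht', hst⟩ := UEG5.exists_noncomm n hn _ hgen
    obtain ⟨sg, hsgS, hsg⟩ := hs'
    obtain ⟨tg, htgS, htg⟩ := ht'
    have hψinj := UEG3.lift_injective_of_not_commute (s := s') (t := t') hst
    have hinj : ∀ m : ℕ, Function.Injective
        (fun f : Fin m → Bool => (List.ofFn fun i => cond (f i) sg tg).prod) := by
      intro m f1 f2 h12
      have key : ∀ f : Fin m → Bool,
          φ ((List.ofFn fun i => cond (f i) sg tg).prod)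
            = FreeGroup.lift (fun b : Bool => cond b s' t')
                (FreeGroup.mk (List.ofFn fun i => (f i, true))) := by
        intro f
        rw [FreeGroup.lift_mk, map_list_prod, List.map_ofFn, List.map_ofFn]
        congr 1
        rw [List.ofFn_inj]
        funext i
        simp only [Function.comp_apply]
        cases f i
        · simp [htg]
        · simp [hsg]
      have h3 : FreeGroup.mk (List.ofFn fun i => (f1 i, true)) =
          FreeGroup.mk (List.ofFn fun i => (f2 i, true)) := by
        apply hψinj
        rw [← key f1, ← key f2]
        exact congrArg φ h12
      have h4 := congrArg FreeGroup.toWord h3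
      have hpos : ∀ (f : Fin m → Bool) (x : Bool × Bool),
          x ∈ (List.ofFn fun i => (f i, true)) → x.2 = true := by
        intro f x hx
        rw [List.mem_ofFn] at hx
        obtain ⟨i, rfl⟩ := hx
        rfl
      rw [FreeGroup.toWord_mk, FreeGroup.toWord_mk,
        UEG5.reduce_pos _ (hpos f1), UEG5.reduce_pos _ (hpos f2)] at h4
      have h5 := List.ofFn_inj.1 h4
      funext i
      have h6 := congrFun h5 i
      exact (Prod.mk.injEq _ _ _ _ ▸ h6 : _ ∧ _).1
    exact UEG5.two_le_growthRate S (UEG5.growthFn_lower S hsgS htgS hinj)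
  have h2 : (2 : ℝ) ≤ minGrowth G := le_ciInf hmain
  linarith
end

section
/- If a finitely generated group Γ has a finite-index subgroup that surjects onto a nonabelian free group (Γ is virtually large), then Γ has uniform exponential growth. -/
open Filter

namespace UGAux

section Ball
variable {G : Type*} [Group G] {S : Set G}

lemma one_mem_wordBall (n : ℕ) : (1:G) ∈ wordBall S n :=
  ⟨[], by simp, by simp, rfl⟩

lemma wordBall_mono {m n : ℕ} (h : m ≤ n) : wordBall S m ⊆ wordBall S n :=
  fun _ ⟨l, h1, h2, h3⟩ => ⟨l, h1, h2.trans h, h3⟩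

lemma mul_mem_wordBall {x y : G} {m n : ℕ} (hx : x ∈ wordBall S m) (hy : y ∈ wordBall S n) :
    x * y ∈ wordBall S (m + n) := by
  obtain ⟨l, a, b, c⟩ := hx
  obtain ⟨l', a', b', c'⟩ := hy
  refine ⟨l ++ l', ?_, ?_, by rw [List.prod_append, c, c']⟩
  · intro z hz
    rcases List.mem_append.1 hz with h | h
    exacts [a z h, a' z h]
  · simpa using Nat.add_le_add b b'

lemma inv_mem_wordBall {x : G} {n : ℕ} (hx : x ∈ wordBall S n) : x⁻¹ ∈ wordBall S n := by
  obtain ⟨l, a, b, c⟩ := hx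
  refine ⟨(l.map fun y => y⁻¹).reverse, ?_, by simpa using b, by rw [← List.prod_inv_reverse, c]⟩
  intro z hz
  simp only [List.mem_reverse, List.mem_map] at hz
  obtain ⟨y, hy, rfl⟩ := hz
  rcases a y hy with h | h
  · exact Or.inr (by simpa using h)
  · exact Or.inl (by simpa using h)

lemma list_prod_mem_wordBall {c : ℕ} :
    ∀ l : List G, (∀ x ∈ l, x ∈ wordBall S c) → l.prod ∈ wordBall S (c * l.length)
  | [], _ => by simpa using one_mem_wordBall 0
  | x :: xs, h => by
    have h1 : x ∈ wordBall S c := h x (by simp)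
    have h2 := list_prod_mem_wordBall xs (fun y hy => h y (by simp [hy]))
    have := mul_mem_wordBall h1 h2
    rw [List.prod_cons]
    convert this using 2
    simp [Nat.mul_succ, Nat.mul_add]
    ring

lemma exists_mem_wordBall_of_closure_top (hS : Subgroup.closure S = ⊤) (g : G) :
    ∃ n, g ∈ wordBall S n := by
  have hg : g ∈ Submonoid.closure (S ∪ S⁻¹) := by
    rw [← Subgroup.closure_toSubmonoid, hS]
    trivial
  obtain ⟨l, h1, h2⟩ := Submonoid.exists_list_of_mem_closure hg
  exact ⟨l.length, l, h1, le_rfl, h2⟩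

lemma wordBall_succ_decomp {m : ℕ} {g : G} (hg : g ∈ wordBall S (m + 1)) :
    ∃ g' x, g' ∈ wordBall S m ∧ (x = 1 ∨ x ∈ S ∪ S⁻¹) ∧ g = g' * x := by
  obtain ⟨l, h1, h2, h3⟩ := hg
  rcases List.eq_nil_or_concat l with rfl | ⟨l', x, rfl⟩
  · exact ⟨1, 1, one_mem_wordBall m, Or.inl rfl, by simp [← h3]⟩
  · refine ⟨l'.prod, x, ⟨l', fun y hy => h1 y (by simp [hy]), ?_, rfl⟩,
      Or.inr (h1 x (by simp)), by rw [← h3]; simp⟩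
    have := h2
    simp only [List.concat_eq_append, List.length_append, List.length_cons,
      List.length_nil] at this
    omega

/-- lists with entries in a set lift to lists in the subtype -/
lemma exists_list_subtype {A : Set G} :
    ∀ l : List G, (∀ x ∈ l, x ∈ A) → ∃ l' : List A, l'.map Subtype.val = l
  | [], _ => ⟨[], rfl⟩
  | x :: xs, h => by
    obtain ⟨l', hl'⟩ := exists_list_subtype xs (fun y hy => h y (by simp [hy]))
    exact ⟨⟨x, h x (by simp)⟩ :: l', by simp [hl']⟩

lemma wordBall_finite (SF : Finset G) (n : ℕ) : (wordBall (SF : Set G) n).Finite := by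
  classical
  have hA : ((SF : Set G) ∪ (SF : Set G)⁻¹).Finite := SF.finite_toSet.union SF.finite_toSet.inv
  have := hA.to_subtype
  have hfin : {l : List ((SF : Set G) ∪ (SF : Set G)⁻¹ : Set G) | l.length ≤ n}.Finite :=
    List.finite_length_le _ n
  have : wordBall (SF : Set G) n ⊆
      (fun l : List ((SF : Set G) ∪ (SF : Set G)⁻¹ : Set G) => (l.map Subtype.val).prod) ''
        {l | l.length ≤ n} := by
    rintro g ⟨l, h1, h2, h3⟩
    obtain ⟨l', hl'⟩ := exists_list_subtype l h1
    refine ⟨l', ?_, by simp [hl', h3]⟩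
    have : l'.length = l.length := by rw [← hl', List.length_map]
    simpa [this] using h2
  exact (hfin.image _).subset this

end Ball

/-- counting lists of bounded length -/
lemma card_lists_le {β : Type*} [Finite β] (n : ℕ) :
    Nat.card {l : List β // l.length ≤ n} ≤ (Nat.card β + 1) ^ n := by
  induction n with
  | zero =>
    have : ∀ x : {l : List β // l.length ≤ 0}, x = ⟨[], by simp⟩ := by
      rintro ⟨l, hl⟩
      simp only [Nat.le_zero, List.length_eq_zero_iff] at hl
      simp [hl]
    have hs : Subsingleton {l : List β // l.length ≤ 0} := ⟨fun a b => by rw [this a, this b]⟩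
    simpa using Nat.card_le_one_iff_subsingleton.mpr hs
  | succ n ih =>
    haveI hfin : Finite {l : List β // l.length ≤ n} :=
      (List.finite_length_le β n).to_subtype
    haveI : Finite (Option (β × {l : List β // l.length ≤ n})) :=
      Finite.of_equiv ((β × {l : List β // l.length ≤ n}) ⊕ PUnit.{1}) (Equiv.optionEquivSumPUnit _).symm
    set f : {l : List β // l.length ≤ n + 1} → Option (β × {l : List β // l.length ≤ n}) :=
      fun l => match l with
        | ⟨[], _⟩ => none
        | ⟨x :: xs, h⟩ => some (x, ⟨xs, by simpa using Nat.le_of_succ_le_succ h⟩) with hf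
    have hinj : Function.Injective f := by
      rintro ⟨l, hl⟩ ⟨l', hl'⟩ h
      match l, l' with
      | [], [] => rfl
      | [], x :: xs => simp [hf] at h
      | x :: xs, [] => simp [hf] at h
      | x :: xs, y :: ys =>
        simp only [hf, Option.some.injEq, Prod.mk.injEq, Subtype.mk.injEq] at h
        simp [h.1, h.2]
    calc Nat.card {l : List β // l.length ≤ n + 1}
        ≤ Nat.card (Option (β × {l : List β // l.length ≤ n})) :=
          Nat.card_le_card_of_injective f hinj
      _ = Nat.card β * Nat.card {l : List β // l.length ≤ n} + 1 := by
          simp [Finite.card_option, Nat.card_prod]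
      _ ≤ (Nat.card β + 1) * (Nat.card β + 1) ^ n := by
          have h1 := Nat.mul_le_mul_left (Nat.card β) ih
          have h2 : 1 ≤ (Nat.card β + 1) ^ n := Nat.one_le_pow _ _ (by omega)
          nlinarith
      _ = (Nat.card β + 1) ^ (n + 1) := by ring


section Schreier
variable {G : Type*} [Group G] (K : Subgroup G) (S : Set G)

/-- The set of right cosets meeting the ball of radius `m`. -/
def cosetsUpTo (m : ℕ) : Set (Quotient (QuotientGroup.rightRel K)) :=
  (fun g => Quotient.mk'' g) '' wordBall S m

variable {K S}

lemma cosetsUpTo_mono {m m' : ℕ} (h : m ≤ m') : cosetsUpTo K S m ⊆ cosetsUpTo K S m' :=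
  Set.image_mono (wordBall_mono h)

lemma cosetsUpTo_step {m : ℕ} (h : cosetsUpTo K S m = cosetsUpTo K S (m + 1)) :
    cosetsUpTo K S (m + 1) = cosetsUpTo K S (m + 2) := by
  refine le_antisymm (cosetsUpTo_mono (by omega)) ?_
  rintro q ⟨g, hg, rfl⟩
  obtain ⟨g', x, hg', hx, rfl⟩ := wordBall_succ_decomp hg
  have : Quotient.mk'' g' ∈ cosetsUpTo K S m := by
    rw [h]; exact ⟨g', hg', rfl⟩
  obtain ⟨r, hr, hrg⟩ := this
  have hrel : (QuotientGroup.rightRel K) r g' := Quotient.eq''.1 hrg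
  rw [QuotientGroup.rightRel_apply] at hrel
  have hx1 : x ∈ wordBall S 1 := by
    rcases hx with rfl | hx
    · exact one_mem_wordBall 1
    · exact ⟨[x], by simpa using hx, by simp, by simp⟩
  refine ⟨r * x, mul_mem_wordBall hr hx1, ?_⟩
  refine Quotient.eq''.2 ?_
  rw [QuotientGroup.rightRel_apply]
  have : g' * x * (r * x)⁻¹ = g' * r⁻¹ := by group
  rw [this]
  exact hrel

lemma cosetsUpTo_stab {m : ℕ} (h : cosetsUpTo K S m = cosetsUpTo K S (m + 1)) :
    ∀ j, cosetsUpTo K S m = cosetsUpTo K S (m + j) := by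
  have aux : ∀ j, cosetsUpTo K S (m + j) = cosetsUpTo K S (m + j + 1) := by
    intro j
    induction j with
    | zero => simpa using h
    | succ j ih =>
      have := cosetsUpTo_step (m := m + j) ih
      convert this using 2 <;> omega
  intro j
  induction j with
  | zero => simp
  | succ j ih =>
    show cosetsUpTo K S m = cosetsUpTo K S (m + j + 1)
    rw [← aux j]
    exact ih

lemma exists_short_rep (hK : K.index ≠ 0) (hS : Subgroup.closure S = ⊤) (g : G) :
    ∃ r, r ∈ wordBall S (K.index - 1) ∧ g * r⁻¹ ∈ K := by
  classical
  set d := K.index with hd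
  have hcard : Nat.card (Quotient (QuotientGroup.rightRel K)) = d :=
    Nat.card_congr (QuotientGroup.quotientRightRelEquivQuotientLeftRel K)
  haveI hfin : Finite (Quotient (QuotientGroup.rightRel K)) :=
    Nat.finite_of_card_ne_zero (by rw [hcard]; exact hK)
  -- there is a stabilization point below d
  have hstab : ∃ m, m ≤ d - 1 ∧ cosetsUpTo K S m = cosetsUpTo K S (m + 1) := by
    by_contra hcon
    push_neg at hcon
    have hgrow : ∀ m, m ≤ d → m + 1 ≤ (cosetsUpTo K S m).ncard := by
      intro m
      induction m with
      | zero =>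
        intro _
        have hne : (cosetsUpTo K S 0).Nonempty := ⟨Quotient.mk'' 1, 1, one_mem_wordBall 0, rfl⟩
        have := (Set.ncard_pos (Set.toFinite _)).mpr hne; omega
      | succ m ih =>
        intro hm
        have h1 : m + 1 ≤ (cosetsUpTo K S m).ncard := ih (by omega)
        have hne : cosetsUpTo K S m ≠ cosetsUpTo K S (m + 1) := hcon m (by omega)
        have hss : cosetsUpTo K S m ⊂ cosetsUpTo K S (m + 1) :=
          (cosetsUpTo_mono (by omega)).ssubset_of_ne hne
        have := Set.ncard_lt_ncard hss (Set.toFinite _)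
        omega
    have h1 := hgrow d le_rfl
    have h2 : (cosetsUpTo K S d).ncard ≤ d := by
      have := Set.ncard_le_ncard (Set.subset_univ (cosetsUpTo K S d)) (Set.toFinite _)
      rwa [Set.ncard_univ, hcard] at this
    omega
  obtain ⟨m, hm, hstab⟩ := hstab
  have huniv : cosetsUpTo K S (d - 1) = Set.univ := by
    apply Set.eq_univ_of_forall
    intro q
    obtain ⟨g0, rfl⟩ := Quotient.exists_rep q
    obtain ⟨nn, hnn⟩ := exists_mem_wordBall_of_closure_top hS g0
    have hq : (Quotient.mk'' g0 : Quotient (QuotientGroup.rightRel K)) ∈ cosetsUpTo K S nn :=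
      ⟨g0, hnn, rfl⟩
    have hqm : (Quotient.mk'' g0 : Quotient (QuotientGroup.rightRel K)) ∈ cosetsUpTo K S m := by
      rcases le_or_gt nn m with h | h
      · exact cosetsUpTo_mono h hq
      · have := cosetsUpTo_stab hstab (nn - m)
        rw [this]
        have : m + (nn - m) = nn := by omega
        rwa [this]
    exact cosetsUpTo_mono hm hqm
  have : (Quotient.mk'' g : Quotient (QuotientGroup.rightRel K)) ∈ cosetsUpTo K S (d - 1) := by
    rw [huniv]; trivial
  obtain ⟨r, hr, hrg⟩ := this
  refine ⟨r, hr, ?_⟩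
  have hrel : (QuotientGroup.rightRel K) r g := Quotient.eq''.1 hrg
  rwa [QuotientGroup.rightRel_apply] at hrel

lemma decomp_aux (hK : K.index ≠ 0) (hS : Subgroup.closure S = ⊤) :
    ∀ l : List G, (∀ x ∈ l, x ∈ S ∪ S⁻¹) → ∀ r r' : G,
      r ∈ wordBall S (K.index - 1) → r' ∈ wordBall S (K.index - 1) →
      r * l.prod * r'⁻¹ ∈ K →
      r * l.prod * r'⁻¹ ∈ Subgroup.closure ((K : Set G) ∩ wordBall S (2 * K.index - 1))
  | [], _, r, r', hr, hr', hmem => by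
    apply Subgroup.subset_closure
    refine ⟨hmem, ?_⟩
    have : r * List.prod [] * r'⁻¹ = r * r'⁻¹ := by simp
    rw [this]
    exact wordBall_mono (by omega) (mul_mem_wordBall hr (inv_mem_wordBall hr'))
  | x :: xs, hl, r, r', hr, hr', hmem => by
    obtain ⟨r'', hr'', hK''⟩ := exists_short_rep hK hS (r * x)
    have hx1 : x ∈ wordBall S 1 := ⟨[x], by simpa using hl x (by simp), by simp, by simp⟩
    have key : r * (x :: xs).prod * r'⁻¹ = (r * x * r''⁻¹) * (r'' * xs.prod * r'⁻¹) := by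
      rw [List.prod_cons]
      group
    have ht1K : r * x * r''⁻¹ ∈ K := hK''
    have ht1ball : r * x * r''⁻¹ ∈ wordBall S (2 * K.index - 1) := by
      have := mul_mem_wordBall (mul_mem_wordBall hr hx1) (inv_mem_wordBall hr'')
      exact wordBall_mono (by omega) this
    have ht2K : r'' * xs.prod * r'⁻¹ ∈ K := by
      have : r'' * xs.prod * r'⁻¹ = (r * x * r''⁻¹)⁻¹ * (r * (x :: xs).prod * r'⁻¹) := by
        rw [List.prod_cons]; group
      rw [this]
      exact K.mul_mem (K.inv_mem ht1K) hmem
    have ih := decomp_aux hK hS xs (fun y hy => hl y (by simp [hy])) r'' r' hr'' hr' ht2K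
    rw [key]
    exact Subgroup.mul_mem _ (Subgroup.subset_closure ⟨ht1K, ht1ball⟩) ih

lemma mem_closure_short (hK : K.index ≠ 0) (hS : Subgroup.closure S = ⊤) {k : G} (hk : k ∈ K) :
    k ∈ Subgroup.closure ((K : Set G) ∩ wordBall S (2 * K.index - 1)) := by
  obtain ⟨nn, l, hl, _, hprod⟩ := exists_mem_wordBall_of_closure_top hS k
  have h1 : (1 : G) ∈ wordBall S (K.index - 1) := one_mem_wordBall _
  have := decomp_aux hK hS l hl 1 1 h1 h1 (by simpa [hprod] using hk)
  simpa [hprod] using this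

end Schreier

/-- The affine group over ℚ: pairs (a, b) with a invertible, acting as x ↦ a x + b. -/
structure Aff where
  a : ℚˣ
  b : ℚ

namespace Aff

@[ext] lemma ext' {x y : Aff} (h1 : x.a = y.a) (h2 : x.b = y.b) : x = y := by
  cases x; cases y; simp_all

instance : Group Aff where
  mul x y := ⟨x.a * y.a, x.b + (x.a : ℚ) * y.b⟩
  one := ⟨1, 0⟩
  inv x := ⟨x.a⁻¹, -((x.a⁻¹ : ℚˣ) : ℚ) * x.b⟩
  mul_assoc x y z := by
    refine ext' ?_ ?_
    · show (x.a * y.a) * z.a = x.a * (y.a * z.a)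
      exact mul_assoc _ _ _
    · show (x.b + (x.a : ℚ) * y.b) + ((x.a * y.a : ℚˣ) : ℚ) * z.b
        = x.b + (x.a : ℚ) * (y.b + (y.a : ℚ) * z.b)
      push_cast; ring
  one_mul x := by
    refine ext' ?_ ?_
    · show (1 : ℚˣ) * x.a = x.a; exact one_mul _
    · show (0 : ℚ) + ((1 : ℚˣ) : ℚ) * x.b = x.b; simp
  mul_one x := by
    refine ext' ?_ ?_
    · show x.a * 1 = x.a; exact mul_one _
    · show x.b + (x.a : ℚ) * 0 = x.b; simp
  inv_mul_cancel x := by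
    refine ext' ?_ ?_
    · show x.a⁻¹ * x.a = 1; exact inv_mul_cancel _
    · show (-((x.a⁻¹ : ℚˣ) : ℚ) * x.b) + ((x.a⁻¹ : ℚˣ) : ℚ) * x.b = 0; ring

lemma mul_a (x y : Aff) : (x * y).a = x.a * y.a := rfl
lemma mul_b (x y : Aff) : (x * y).b = x.b + (x.a : ℚ) * y.b := rfl
lemma one_a : (1 : Aff).a = 1 := rfl
lemma one_b : (1 : Aff).b = 0 := rfl

/-- First component as a group hom. -/
def fstHom : Aff →* ℚˣ where
  toFun := Aff.a
  map_one' := rfl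
  map_mul' _ _ := rfl

/-- Elements with scaling part ≠ 1 are not centralized by the unit translation. -/
lemma not_commute_translation (z : Aff) (hz : z.a ≠ 1) :
    (⟨1, 1⟩ : Aff) * z ≠ z * ⟨1, 1⟩ := by
  intro h
  have hb := congrArg Aff.b h
  simp only [mul_b] at hb
  apply hz
  simp only [Units.val_one, one_mul, mul_b] at hb
  have : ((z.a : ℚˣ) : ℚ) = 1 := by
    have hb' : (1 : ℚ) + z.b = z.b + (z.a : ℚ) * (1 : ℚ) := by simpa using hb
    nlinarith [hb']
  exact Units.ext (by simpa using this)

/-- Second component of a product of affine maps all with the same scaling `Λ`. -/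
lemma prod_b (Λ : ℚˣ) : ∀ l : List Aff, (∀ x ∈ l, x.a = Λ) →
    l.prod.b = (l.map Aff.b).foldr (fun b acc => b + (Λ : ℚ) * acc) 0
  | [], _ => rfl
  | x :: xs, h => by
    have hx : x.a = Λ := h x (by simp)
    have ih := prod_b Λ xs (fun y hy => h y (by simp [hy]))
    simp [List.prod_cons, mul_b, ih, hx]

end Aff

section KeyEstimate

variable (Λ : ℚ) (β γ : ℚ)

/-- The affine evaluation of a boolean word. -/
def evalWord (l : List Bool) : ℚ :=
  (l.map fun c => if c then β else γ).foldr (fun b acc => b + Λ * acc) 0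

lemma evalWord_nil : evalWord Λ β γ [] = 0 := rfl

lemma evalWord_cons (c : Bool) (l : List Bool) :
    evalWord Λ β γ (c :: l) = (if c then β else γ) + Λ * evalWord Λ β γ l := rfl

/-- Key injectivity estimate: distinct boolean words of the same length have affine
evaluations differing by at least `|β - γ|`, provided `|Λ| ≥ 2`. -/
lemma evalWord_separation (hΛ : 2 ≤ |Λ|) :
    ∀ l l' : List Bool, l.length = l'.length → l ≠ l' →
      |β - γ| ≤ |evalWord Λ β γ l - evalWord Λ β γ l'|
  | [], [], _, hne => absurd rfl hne
  | [], _ :: _, hlen, _ => by simp at hlen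
  | _ :: _, [], hlen, _ => by simp at hlen
  | x :: xs, y :: ys, hlen, hne => by
    have hlen' : xs.length = ys.length := by simpa using hlen
    rw [evalWord_cons, evalWord_cons]
    by_cases hxy : x = y
    · subst hxy
      have hne' : xs ≠ ys := fun h => hne (by rw [h])
      have ih := evalWord_separation hΛ xs ys hlen' hne'
      have habs : |β - γ| ≥ 0 := abs_nonneg _
      have h2 : |((if x then β else γ) + Λ * evalWord Λ β γ xs) -
          ((if x then β else γ) + Λ * evalWord Λ β γ ys)|
          = |Λ| * |evalWord Λ β γ xs - evalWord Λ β γ ys| := by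
        rw [← abs_mul]; ring_nf
      rw [h2]
      nlinarith [abs_nonneg (evalWord Λ β γ xs - evalWord Λ β γ ys)]
    · have hd : |(if x then β else γ) - (if y then β else γ)| = |β - γ| := by
        rcases Bool.eq_false_or_eq_true x with hx | hx <;>
          rcases Bool.eq_false_or_eq_true y with hy | hy <;>
          subst hx <;> subst hy <;> simp_all [abs_sub_comm]
      by_cases hxs : xs = ys
      · subst hxs
        have : ((if x then β else γ) + Λ * evalWord Λ β γ xs) -
            ((if y then β else γ) + Λ * evalWord Λ β γ xs)
            = (if x then β else γ) - (if y then β else γ) := by ring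
        rw [this, hd]
      · have ih := evalWord_separation hΛ xs ys hlen' hxs
        set u := (if x then β else γ) - (if y then β else γ) with hu
        set v := Λ * (evalWord Λ β γ xs - evalWord Λ β γ ys) with hv
        have hsum : ((if x then β else γ) + Λ * evalWord Λ β γ xs) -
            ((if y then β else γ) + Λ * evalWord Λ β γ ys) = u + v := by
          rw [hu, hv]; ring
        rw [hsum]
        have hvbig : 2 * |β - γ| ≤ |v| := by
          rw [hv, abs_mul]
          nlinarith [abs_nonneg (evalWord Λ β γ xs - evalWord Λ β γ ys), abs_nonneg (β - γ)]
        have htri : |v| ≤ |u + v| + |u| := by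
          have h0 : v = (u + v) - u := by ring
          calc |v| = |(u + v) - u| := by rw [← h0]
            _ ≤ |u + v| + |u| := abs_sub _ _
        rw [hd] at htri
        linarith
end KeyEstimate


section Pair

variable {G : Type*} [Group G]

/-- The scaling-by-2 unit. -/
def u2 : ℚˣ := Units.mk0 2 (by norm_num)

lemma u2_ne_one : u2 ≠ 1 := by
  intro h
  have := congrArg Units.val h
  norm_num [u2] at this

/-- Extraction of a good pair of short elements generating a free subsemigroup. -/
lemma exists_good_pair (K : Subgroup G) (hK : K.index ≠ 0)
    {n : ℕ} (hn : 2 ≤ n) (φ : K →* FreeGroup (Fin n)) (hφ : Function.Surjective φ)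
    (S : Set G) (hS : Subgroup.closure S = ⊤) :
    ∃ (P Q : K) (ψ : K →* Aff),
      (P : G) ∈ wordBall S (6 * K.index) ∧ (Q : G) ∈ wordBall S (6 * K.index) ∧
      ψ P ≠ ψ Q ∧ (ψ P).a = (ψ Q).a ∧ 2 ≤ |(((ψ P).a : ℚˣ) : ℚ)| := by
  classical
  set d := K.index with hd
  have hd1 : 1 ≤ d := Nat.pos_of_ne_zero hK
  set t : Aff := ⟨u2, 0⟩ with ht
  set a1 : Aff := ⟨1, 1⟩ with ha1
  set i0 : Fin n := ⟨0, by omega⟩ with hi0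
  set i1 : Fin n := ⟨1, by omega⟩ with hi1
  set ρ : FreeGroup (Fin n) →* Aff := FreeGroup.lift (fun i => if i = i0 then t else a1) with hρ
  set ψ : K →* Aff := ρ.comp φ with hψ
  set χ : K →* ℚˣ := Aff.fstHom.comp ψ with hχ
  have hρ_of : ∀ i : Fin n, ρ (FreeGroup.of i) = if i = i0 then t else a1 := by
    intro i; simp [hρ]
  have hrange : ∀ w : FreeGroup (Fin n), Aff.fstHom (ρ w) ∈ Subgroup.zpowers u2 := by
    intro w
    induction w using FreeGroup.induction_on with
    | C1 => simp only [map_one]; exact Subgroup.one_mem _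
    | of i =>
      have : (pure i : FreeGroup (Fin n)) = FreeGroup.of i := rfl
      rw [hρ_of]
      by_cases h : i = i0
      · rw [if_pos h]; exact Subgroup.mem_zpowers _
      · rw [if_neg h]
        have : Aff.fstHom a1 = 1 := rfl
        rw [this]; exact Subgroup.one_mem _
    | inv_of i ih => simp only [map_inv]; exact Subgroup.inv_mem _ ih
    | mul x y hx hy => simp only [map_mul]; exact Subgroup.mul_mem _ hx hy
  have hχ_zpow : ∀ k : K, χ k ∈ Subgroup.zpowers u2 := fun k => hrange (φ k)
  set M : Set G := (K : Set G) ∩ wordBall S (2 * d - 1) with hM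
  have hKM : ∀ k : K, (k : G) ∈ Subgroup.closure M := fun k => mem_closure_short hK hS k.2
  -- (a) a short element with nontrivial scaling
  have ha : ∃ p₀ : K, (p₀ : G) ∈ wordBall S (2 * d - 1) ∧ χ p₀ ≠ 1 := by
    by_contra hcon
    push_neg at hcon
    set Ka : Subgroup G := Subgroup.map K.subtype χ.ker with hKa
    have hMKa : M ⊆ Ka := by
      rintro x ⟨hxK, hxB⟩
      exact ⟨⟨x, hxK⟩, MonoidHom.mem_ker.2 (hcon ⟨x, hxK⟩ hxB), rfl⟩
    have hKKa : ∀ k : K, (k : G) ∈ Ka := fun k =>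
      (Subgroup.closure_le Ka |>.2 hMKa) (hKM k)
    obtain ⟨k₀, hk₀⟩ := hφ (FreeGroup.of i0)
    have hχk₀ : χ k₀ = u2 := by
      simp only [hχ, hψ, MonoidHom.comp_apply, hk₀, hρ_of, if_pos rfl]
      rfl
    obtain ⟨y, hy, hyk⟩ := hKKa k₀
    have : y = k₀ := Subtype.ext hyk
    rw [this] at hy
    simp only [SetLike.mem_coe] at hy
    rw [MonoidHom.mem_ker, hχk₀] at hy
    exact u2_ne_one hy
  obtain ⟨p₀, hp₀B, hp₀χ⟩ := ha
  -- (b) a short conjugator moving ψ p₀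
  have hb : ∃ h₀ : K, (h₀ : G) ∈ wordBall S (2 * d - 1) ∧
      ψ (h₀ * p₀ * h₀⁻¹) ≠ ψ p₀ := by
    by_contra hcon
    push_neg at hcon
    set Kb : Subgroup G :=
      Subgroup.map K.subtype ((Subgroup.centralizer {ψ p₀}).comap ψ) with hKb
    have hMKb : M ⊆ Kb := by
      rintro x ⟨hxK, hxB⟩
      refine ⟨⟨x, hxK⟩, ?_, rfl⟩
      simp only [SetLike.mem_coe]
      rw [Subgroup.mem_comap, Subgroup.mem_centralizer_iff]
      rintro z hz
      rw [Set.mem_singleton_iff] at hz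
      subst hz
      have := hcon ⟨x, hxK⟩ hxB
      have hconj : ψ (⟨x, hxK⟩ * p₀ * (⟨x, hxK⟩ : K)⁻¹) =
          ψ ⟨x, hxK⟩ * ψ p₀ * (ψ ⟨x, hxK⟩)⁻¹ := by
        simp [map_mul, map_inv]
      rw [hconj] at this
      -- this : ψ x * ψ p₀ * (ψ x)⁻¹ = ψ p₀
      have h2 : ψ ⟨x, hxK⟩ * ψ p₀ = ψ p₀ * ψ ⟨x, hxK⟩ := by
        have h' := this
        rw [mul_inv_eq_iff_eq_mul] at h'
        exact h'
      rw [h2]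
    have hKKb : ∀ k : K, (k : G) ∈ Kb := fun k =>
      (Subgroup.closure_le Kb |>.2 hMKb) (hKM k)
    obtain ⟨k₁, hk₁⟩ := hφ (FreeGroup.of i1)
    have hψk₁ : ψ k₁ = a1 := by
      simp only [hψ, MonoidHom.comp_apply, hk₁, hρ_of]
      rw [if_neg]
      intro h
      rw [hi1, hi0] at h
      have := congrArg Fin.val h
      simp at this
    obtain ⟨y, hy, hyk⟩ := hKKb k₁
    have hyek : y = k₁ := Subtype.ext hyk
    rw [hyek] at hy
    simp only [SetLike.mem_coe] at hy
    rw [Subgroup.mem_comap, Subgroup.mem_centralizer_iff] at hy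
    have hcomm := hy (ψ p₀) (Set.mem_singleton _)
    rw [hψk₁] at hcomm
    -- hcomm : ψ p₀ * a1 = a1 * ψ p₀
    have hza : (ψ p₀).a ≠ 1 := by
      intro h
      apply hp₀χ
      exact Units.ext (congrArg Units.val (by exact h))
    exact Aff.not_commute_translation (ψ p₀) hza hcomm.symm
  obtain ⟨h₀, hh₀B, hh₀ψ⟩ := hb
  -- sign normalization
  obtain ⟨kz, hkz⟩ := Subgroup.mem_zpowers_iff.1 (hχ_zpow p₀)
  have hkz0 : kz ≠ 0 := by
    rintro rfl
    simp at hkz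
    exact hp₀χ hkz.symm
  have habs : ∀ (m : ℤ), 1 ≤ m → 2 ≤ |((u2 ^ m : ℚˣ) : ℚ)| := by
    intro m hm
    have h1 : ((u2 ^ m : ℚˣ) : ℚ) = (2 : ℚ) ^ m := by
      rw [Units.val_zpow_eq_zpow_val]; norm_num [u2]
    rw [h1]
    have h2 : (2 : ℚ) ^ m = (2 : ℚ) ^ m.toNat := by
      rw [← zpow_natCast]
      congr 1
      omega
    rw [h2, abs_of_nonneg (by positivity)]
    calc (2 : ℚ) = 2 ^ 1 := (pow_one 2).symm
      _ ≤ 2 ^ m.toNat := pow_le_pow_right₀ one_le_two (by omega)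
  have haP : ∀ x : K, (ψ x).a = χ x := fun _ => rfl
  have hχconj : ∀ (u : K), χ (h₀ * u * h₀⁻¹) = χ u := by
    intro u
    rw [map_mul, map_mul, map_inv]
    rw [mul_comm (χ h₀) (χ u), mul_assoc]
    simp
  rcases lt_or_gt_of_ne hkz0 with hneg | hpos
  · -- kz < 0 : use inverses
    refine ⟨p₀⁻¹, h₀ * p₀⁻¹ * h₀⁻¹, ψ, ?_, ?_, ?_, ?_, ?_⟩
    · exact wordBall_mono (by omega) (inv_mem_wordBall hp₀B)
    · have : ((h₀ * p₀⁻¹ * h₀⁻¹ : K) : G) = (h₀ : G) * (p₀ : G)⁻¹ * (h₀ : G)⁻¹ := by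
        push_cast; rfl
      rw [this]
      have := mul_mem_wordBall (mul_mem_wordBall hh₀B (inv_mem_wordBall hp₀B))
        (inv_mem_wordBall hh₀B)
      exact wordBall_mono (by omega) this
    · intro h
      apply hh₀ψ
      have h1 : h₀ * p₀⁻¹ * h₀⁻¹ = (h₀ * p₀ * h₀⁻¹)⁻¹ := by group
      rw [h1, map_inv, map_inv] at h
      exact inv_injective h.symm
    · rw [haP, haP, hχconj]
    · rw [haP, map_inv, ← hkz, ← zpow_neg]
      exact habs _ (by omega)
  · -- kz > 0
    refine ⟨p₀, h₀ * p₀ * h₀⁻¹, ψ, ?_, ?_, ?_, ?_, ?_⟩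
    · exact wordBall_mono (by omega) hp₀B
    · have : ((h₀ * p₀ * h₀⁻¹ : K) : G) = (h₀ : G) * (p₀ : G) * (h₀ : G)⁻¹ := by
        push_cast; rfl
      rw [this]
      have := mul_mem_wordBall (mul_mem_wordBall hh₀B hp₀B) (inv_mem_wordBall hh₀B)
      exact wordBall_mono (by omega) this
    · exact fun h => hh₀ψ h.symm
    · rw [haP, haP, hχconj]
    · rw [haP, ← hkz]
      exact habs _ (by omega)

end Pair

section Growth

variable {G : Type*} [Group G]

/-- Lower bound on the growth function coming from a good pair. -/
lemma growth_lower (K : Subgroup G) (hK : K.index ≠ 0)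
    {n : ℕ} (hn : 2 ≤ n) (φ : K →* FreeGroup (Fin n)) (hφ : Function.Surjective φ)
    (S : Finset G) (hS : Subgroup.closure (S : Set G) = ⊤) (j : ℕ) :
    2 ^ j ≤ growthFn (S : Set G) (6 * K.index * j) := by
  classical
  obtain ⟨P, Q, ψ, hPB, hQB, hPQ, hPQa, habs⟩ :=
    exists_good_pair K hK hn φ hφ (S : Set G) hS
  set d := K.index with hd
  set pick : Bool → K := fun c => if c then P else Q with hpick
  set wmap : List Bool → K := fun l => (l.map pick).prod with hwmap
  set Λ : ℚ := (((ψ P).a : ℚˣ) : ℚ) with hΛ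
  set β : ℚ := (ψ P).b with hβ
  set γ : ℚ := (ψ Q).b with hγ
  have hβγ : β ≠ γ := by
    intro h
    exact hPQ (Aff.ext' hPQa h)
  -- the image of the word in the affine group
  have hψw : ∀ l : List Bool, (ψ (wmap l)).b = evalWord Λ β γ l := by
    intro l
    have h1 : ψ (wmap l) = (l.map (fun c => ψ (pick c))).prod := by
      rw [hwmap]
      rw [map_list_prod]
      rw [List.map_map]
      rfl
    have h2 : ∀ x ∈ l.map (fun c => ψ (pick c)), x.a = (ψ P).a := by
      intro x hx
      rw [List.mem_map] at hx
      obtain ⟨c, _, rfl⟩ := hx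
      cases c <;> simp [hpick, hPQa]
    rw [h1, Aff.prod_b ((ψ P).a) _ h2, List.map_map]
    unfold evalWord
    congr 1
    congr 1
    funext c
    cases c <;> simp [hpick, hβ, hγ]
  -- injectivity of words of a fixed length
  have hinj : ∀ l l' : List Bool, l.length = l'.length → wmap l = wmap l' → l = l' := by
    intro l l' hlen heq
    by_contra hne
    have hsep := evalWord_separation Λ β γ habs l l' hlen hne
    have : evalWord Λ β γ l = evalWord Λ β γ l' := by
      rw [← hψw, ← hψw, heq]
    rw [this] at hsep
    simp only [sub_self, abs_zero] at hsep
    have : β = γ := by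
      have := abs_nonneg (β - γ)
      have h0 : |β - γ| = 0 := le_antisymm hsep (abs_nonneg _)
      rwa [abs_eq_zero, sub_eq_zero] at h0
    exact hβγ this
  -- membership of words in balls
  have hmem : ∀ l : List Bool, ((wmap l : K) : G) ∈ wordBall (S : Set G) (6 * d * l.length) := by
    intro l
    have h1 : ∀ l' : List Bool,
        ((wmap l' : K) : G) = (l'.map (fun c => ((pick c : K) : G))).prod := by
      intro l'
      induction l' with
      | nil => simp [hwmap]
      | cons c cs ih => simp only [hwmap, List.map_cons, List.prod_cons] at ih ⊢; push_cast [ih]; rfl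
    rw [h1]
    have h2 := list_prod_mem_wordBall (S := (S : Set G)) (c := 6 * d)
      (l.map (fun c => ((pick c : K) : G))) ?_
    · simpa using h2
    · intro x hx
      rw [List.mem_map] at hx
      obtain ⟨c, _, rfl⟩ := hx
      cases c <;> simp [hpick, hPB, hQB]
  -- the injection from `Fin j → Bool`
  haveI hfin : Finite (wordBall (S : Set G) (6 * d * j)) :=
    (wordBall_finite S (6 * d * j)).to_subtype
  set F : (Fin j → Bool) → wordBall (S : Set G) (6 * d * j) :=
    fun bits => ⟨((wmap (List.ofFn bits) : K) : G), by
      have := hmem (List.ofFn bits)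
      simpa using this⟩ with hF
  have hFinj : Function.Injective F := by
    intro b b' h
    have h1 := congrArg (fun z : wordBall (S : Set G) (6 * d * j) => (z : G)) h
    have h2 : wmap (List.ofFn b) = wmap (List.ofFn b') := Subtype.ext h1
    have h3 := hinj (List.ofFn b) (List.ofFn b') (by simp) h2
    exact List.ofFn_injective h3
  calc 2 ^ j = Nat.card (Fin j → Bool) := by
        simp [Nat.card_fun]
    _ ≤ Nat.card (wordBall (S : Set G) (6 * d * j)) :=
        Nat.card_le_card_of_injective F hFinj
    _ = growthFn (S : Set G) (6 * d * j) := rfl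

/-- Upper bound on the growth function. -/
lemma growth_upper (S : Finset G) (m : ℕ) :
    growthFn (S : Set G) m ≤
      (Nat.card ((S : Set G) ∪ (S : Set G)⁻¹ : Set G) + 1) ^ m := by
  classical
  have hA : ((S : Set G) ∪ (S : Set G)⁻¹).Finite := S.finite_toSet.union S.finite_toSet.inv
  haveI := hA.to_subtype
  haveI : Finite {l : List ((S : Set G) ∪ (S : Set G)⁻¹ : Set G) // l.length ≤ m} := by
    exact (List.finite_length_le _ m).to_subtype
  set f : {l : List ((S : Set G) ∪ (S : Set G)⁻¹ : Set G) // l.length ≤ m} →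
      wordBall (S : Set G) m :=
    fun l => ⟨(l.1.map Subtype.val).prod, l.1.map Subtype.val,
      by
        intro x hx
        rw [List.mem_map] at hx
        obtain ⟨y, _, rfl⟩ := hx
        exact y.2,
      by simpa using l.2, rfl⟩ with hf
  have hsurj : Function.Surjective f := by
    rintro ⟨g, l, h1, h2, h3⟩
    obtain ⟨l', hl'⟩ := exists_list_subtype l h1
    have hlen : l'.length = l.length := by rw [← hl', List.length_map]
    refine ⟨⟨l', by omega⟩, ?_⟩
    apply Subtype.ext
    simp only [hf]
    rw [hl', h3]
  calc growthFn (S : Set G) m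
      = Nat.card (wordBall (S : Set G) m) := rfl
    _ ≤ Nat.card {l : List ((S : Set G) ∪ (S : Set G)⁻¹ : Set G) // l.length ≤ m} :=
        Nat.card_le_card_of_surjective f hsurj
    _ ≤ (Nat.card ((S : Set G) ∪ (S : Set G)⁻¹ : Set G) + 1) ^ m := card_lists_le m

/-- Conversion of the growth function lower bound to a growth rate lower bound. -/
lemma growthRate_ge (S : Finset G) {L : ℕ} (hL : 1 ≤ L)
    (hgrow : ∀ j, 2 ^ j ≤ growthFn (S : Set G) (L * j)) :
    (2 : ℝ) ^ (1 / (L : ℝ)) ≤ growthRate (S : Set G) := by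
  set c : ℕ := Nat.card ((S : Set G) ∪ (S : Set G)⁻¹ : Set G) with hc
  set u : ℕ → ℝ := fun m => (growthFn (S : Set G) m : ℝ) ^ (1 / (m : ℝ)) with hu
  have hbdd : IsBoundedUnder (· ≤ ·) atTop u := by
    refine isBoundedUnder_of ⟨max 1 ((c : ℝ) + 1), ?_⟩
    intro m
    rcases Nat.eq_zero_or_pos m with rfl | hm
    · simp [hu]
    · have h1 : u m ≤ (((c + 1) ^ m : ℕ) : ℝ) ^ (1 / (m : ℝ)) := by
        apply Real.rpow_le_rpow (by positivity) ?_ (by positivity)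
        exact_mod_cast growth_upper S m
      have h2 : (((c + 1) ^ m : ℕ) : ℝ) ^ (1 / (m : ℝ)) = (c : ℝ) + 1 := by
        push_cast
        rw [← Real.rpow_natCast ((c : ℝ) + 1) m, ← Real.rpow_mul (by positivity)]
        rw [mul_one_div, div_self (by exact_mod_cast hm.ne'), Real.rpow_one]
      rw [h2] at h1
      exact h1.trans (le_max_right _ _)
  have hfreq : ∃ᶠ m in atTop, (2 : ℝ) ^ (1 / (L : ℝ)) ≤ u m := by
    rw [Filter.frequently_atTop]
    intro N
    refine ⟨L * (max 1 N), ?_, ?_⟩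
    · calc N ≤ max 1 N := le_max_right _ _
        _ ≤ L * (max 1 N) := Nat.le_mul_of_pos_left _ (by omega)
    · set j := max 1 N with hj
      have hj1 : 1 ≤ j := le_max_left _ _
      have hLj : (L * j : ℝ) ≠ 0 := by
        have : 0 < L * j := by positivity
        exact_mod_cast (Nat.pos_of_ne_zero (by positivity)).ne'
      have h1 : (((2 : ℕ) ^ j : ℕ) : ℝ) ^ (1 / ((L * j : ℕ) : ℝ)) ≤ u (L * j) := by
        apply Real.rpow_le_rpow (by positivity) ?_ (by positivity)
        exact_mod_cast hgrow j
      have h2 : (((2 : ℕ) ^ j : ℕ) : ℝ) ^ (1 / ((L * j : ℕ) : ℝ)) = (2 : ℝ) ^ (1 / (L : ℝ)) := by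
        push_cast
        rw [← Real.rpow_natCast (2 : ℝ) j, ← Real.rpow_mul (by norm_num)]
        congr 1
        have hL0 : (L : ℝ) ≠ 0 := by exact_mod_cast (by omega : L ≠ 0)
        have hj0 : (j : ℝ) ≠ 0 := by exact_mod_cast (by omega : j ≠ 0)
        field_simp
      rw [h2] at h1
      exact h1
  exact le_limsup_of_frequently_le hfreq hbdd

end Growth
end UGAux

theorem virtually_large_implies_uniform_growth {G : Type*} [Group G] [Group.FG G]
    (K : Subgroup G) (hK : K.index ≠ 0)
    (n : ℕ) (hn : 2 ≤ n) (φ : K →* FreeGroup (Fin n))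
    (hφ : Function.Surjective φ) :
    1 < minGrowth G := by
  obtain ⟨Sfin, hSfin⟩ : ∃ S : Finset G, Subgroup.closure (S : Set G) = ⊤ := by
    obtain ⟨S, hS1, hS2⟩ := Group.fg_iff.mp ‹Group.FG G›
    exact ⟨hS2.toFinset, by rwa [Set.Finite.coe_toFinset]⟩
  haveI : Nonempty {S : Finset G // Subgroup.closure (S : Set G) = ⊤} := ⟨⟨Sfin, hSfin⟩⟩
  set L : ℕ := 6 * K.index with hL
  have hL1 : 1 ≤ L := by
    have := Nat.pos_of_ne_zero hK
    omega
  have hfor : ∀ T : {S : Finset G // Subgroup.closure (S : Set G) = ⊤},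
      (2 : ℝ) ^ (1 / (L : ℝ)) ≤ growthRate ((T : Finset G) : Set G) := by
    rintro ⟨T, hT⟩
    exact UGAux.growthRate_ge T hL1 (fun j => UGAux.growth_lower K hK hn φ hφ T hT j)
  have h1 : (1 : ℝ) < (2 : ℝ) ^ (1 / (L : ℝ)) := by
    rw [Real.one_lt_rpow_iff_of_pos (by norm_num)]
    left
    constructor
    · norm_num
    · have : (0 : ℝ) < (L : ℝ) := by exact_mod_cast hL1
      positivity
  calc (1 : ℝ) < (2 : ℝ) ^ (1 / (L : ℝ)) := h1
    _ ≤ minGrowth G := le_ciInf hfor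
end

section
/- Let g be a hyperbolic isometry of a tree with axis A, and let s be an isometry with sA ≠ A. Then h = sgs⁻¹ is hyperbolic with axis sA, and g and h are hyperbolic isometries with distinct axes; consequently one of the four pairs {g^{±1}, h^{±1}} freely generates a free semigroup of rank 2. -/
open Filter

/-- `X` is a real tree: a geodesic metric space satisfying the 0-hyperbolic
four point condition. -/
def IsRTree (X : Type*) [MetricSpace X] : Prop :=
  (∀ x y : X, ∃ f : ℝ → X, f 0 = x ∧ f (dist x y) = y ∧
    ∀ s ∈ Set.Icc (0 : ℝ) (dist x y), ∀ t ∈ Set.Icc (0 : ℝ) (dist x y),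
      dist (f s) (f t) = |s - t|) ∧
  (∀ x y z w : X, dist x y + dist z w ≤ max (dist x z + dist y w) (dist x w + dist y z))

/-- The translation length of an isometry. -/
noncomputable def translationLength {X : Type*} [MetricSpace X] (g : X ≃ᵢ X) : ℝ :=
  ⨅ x : X, dist x (g x)

/-- An isometry is hyperbolic if its translation length is positive and attained. -/
def IsHyperbolicIsometry {X : Type*} [MetricSpace X] (g : X ≃ᵢ X) : Prop :=
  0 < translationLength g ∧ ∃ x : X, dist x (g x) = translationLength g

/-- The axis of a (hyperbolic) isometry: the set of points where the
translation length is attained. -/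
def axisOf {X : Type*} [MetricSpace X] (g : X ≃ᵢ X) : Set X :=
  {x | dist x (g x) = translationLength g}
/-- `g` and `h` freely generate a free subsemigroup of rank 2: the evaluation map
from the free semigroup on two letters is injective. -/
def FreelyGenerateFreeSemigroup {G : Type*} [Semigroup G] (g h : G) : Prop :=
  Function.Injective ⇑(FreeSemigroup.lift ![g, h])
namespace RT
variable {X : Type*} [MetricSpace X]

noncomputable def gp (c x y : X) : ℝ := (dist x c + dist y c - dist x y) / 2

lemma gp_nonneg (c x y : X) : 0 ≤ gp c x y := by
  have h := dist_triangle x c y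
  have h2 := dist_comm y c
  rw [gp]; linarith

lemma gp_comm (c x y : X) : gp c x y = gp c y x := by
  rw [gp, gp, dist_comm x y]; ring

lemma gp_eq_zero_iff (c x y : X) : gp c x y = 0 ↔ dist x y = dist x c + dist c y := by
  rw [gp, dist_comm c y]; constructor <;> intro h <;> linarith

lemma gp_min (hX : IsRTree X) (c x y z : X) : min (gp c x y) (gp c y z) ≤ gp c x z := by
  have h4 := hX.2 x z y c
  have c1 := dist_comm c y; have c2 := dist_comm c z; have c3 := dist_comm z y
  have c4 := dist_comm x y
  rcases le_max_iff.1 h4 with h | h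
  · refine le_trans (min_le_left _ _) ?_
    rw [gp, gp]; linarith
  · refine le_trans (min_le_right _ _) ?_
    rw [gp, gp]; linarith

lemma lemA (hX : IsRTree X) {x m y : X} (h : dist x m + dist m y = dist x y) (w : X) :
    dist w m = max (dist w x - dist x m) (dist w y - dist m y) := by
  have c1 := dist_comm m y; have c2 := dist_comm m x
  apply le_antisymm
  · have h4 := hX.2 w m x y
    rcases le_max_iff.1 h4 with h' | h'
    · refine le_trans ?_ (le_max_left _ _); linarith
    · refine le_trans ?_ (le_max_right _ _); linarith
  · apply max_le
    · have := dist_triangle w m x; linarith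
    · have := dist_triangle w m y; linarith

lemma lemB (hX : IsRTree X) {a b c e : X} (h1 : dist a b + dist b c = dist a c)
    (h2 : dist b c + dist c e = dist b e) (hpos : 0 < dist b c) :
    dist a e = dist a b + dist b e := by
  have hA := lemA hX h1 e
  have c1 := dist_comm e b; have c2 := dist_comm e c; have c3 := dist_comm e a
  have c4 := dist_comm c e
  have h3 : dist e c - dist b c < dist e b := by linarith
  rcases max_cases (dist e a - dist a b) (dist e c - dist b c) with ⟨he, _⟩ | ⟨he, hle⟩
  · rw [he] at hA; linarith
  · rw [he] at hA; linarith

lemma exists_between (hX : IsRTree X) (x y : X) {t : ℝ} (h0 : 0 ≤ t) (ht : t ≤ dist x y) :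
    ∃ m : X, dist x m = t ∧ dist m y = dist x y - t := by
  obtain ⟨f, hf0, hfd, hf⟩ := hX.1 x y
  refine ⟨f t, ?_, ?_⟩
  · have := hf 0 ⟨le_refl 0, dist_nonneg⟩ t ⟨h0, ht⟩
    rw [hf0] at this; rw [this, abs_of_nonpos (by linarith)]; ring
  · have := hf t ⟨h0, ht⟩ (dist x y) ⟨dist_nonneg, le_refl _⟩
    rw [hfd] at this; rw [this, abs_of_nonpos (by linarith)]; ring

variable {X : Type*} [MetricSpace X]

lemma tl_le [Nonempty X] (g : X ≃ᵢ X) (x : X) : translationLength g ≤ dist x (g x) :=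
  ciInf_le ⟨0, Set.forall_mem_range.2 fun _ => dist_nonneg⟩ x

lemma dist_apply_inv (g : X ≃ᵢ X) (x y : X) : dist x (g⁻¹ y) = dist (g x) y := by
  conv_rhs => rw [show y = g (g⁻¹ y) by simp]
  exact (g.dist_eq x (g⁻¹ y)).symm

lemma tl_inv (g : X ≃ᵢ X) : translationLength g⁻¹ = translationLength g := by
  unfold translationLength
  congr 1; funext x
  rw [dist_apply_inv, dist_comm]

lemma axis_inv (g : X ≃ᵢ X) : axisOf g⁻¹ = axisOf g := by
  ext x; unfold axisOf; simp only [Set.mem_setOf_eq]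
  rw [dist_apply_inv, dist_comm, tl_inv]

lemma hyp_inv {g : X ≃ᵢ X} (hg : IsHyperbolicIsometry g) : IsHyperbolicIsometry g⁻¹ := by
  obtain ⟨h1, x, hx⟩ := hg
  refine ⟨by rwa [tl_inv], ⟨g x, ?_⟩⟩
  rw [tl_inv]
  have e : g⁻¹ (g x) = x := g.symm_apply_apply x
  rw [show (g⁻¹) (g x) = x from e, dist_comm]
  exact hx

section chain
variable [Nonempty X]

lemma dist_two (hX : IsRTree X) (g : X ≃ᵢ X) (hL : 0 < translationLength g) {c : X}
    (hc : dist c (g c) = translationLength g) : dist c (g (g c)) = 2 * translationLength g := by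
  set L := translationLength g with hLdef
  have h2 : (0:ℝ) ≤ L / 2 := by linarith
  have h2' : L / 2 ≤ dist c (g c) := by rw [hc]; linarith
  obtain ⟨m, hm1, hm2⟩ := exists_between hX c (g c) h2 h2'
  rw [hc] at hm2
  have hgm1 : dist (g c) (g m) = L / 2 := by rw [g.dist_eq]; exact hm1
  have hgm2 : dist (g m) (g (g c)) = L / 2 := by rw [g.dist_eq, hm2]; ring
  have hgc2 : dist (g c) (g (g c)) = L := by rw [g.dist_eq]; exact hc
  have hbet2 : dist (g c) (g m) + dist (g m) (g (g c)) = dist (g c) (g (g c)) := by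
    rw [hgm1, hgm2, hgc2]; ring
  have hbet1 : dist c m + dist m (g c) = dist c (g c) := by rw [hm1, hm2, hc]; ring
  have A1 := lemA hX hbet2 c
  have A2 := lemA hX hbet1 (g m)
  rw [hgm1, hgm2] at A1
  rw [hm1, hm2] at A2
  have htl : L ≤ dist m (g m) := tl_le g m
  have hcomm : dist m (g m) = dist (g m) m := dist_comm _ _
  have hgmgc : dist (g m) (g c) = L / 2 := by rw [dist_comm]; exact hgm1
  rw [hgmgc] at A2
  have hA2' : L ≤ max (dist (g m) c - L / 2) (L / 2 - (L - L / 2)) := by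
    rw [← A2, ← hcomm]; exact htl
  have hgmc : (3:ℝ) / 2 * L ≤ dist (g m) c := by
    rcases le_max_iff.1 hA2' with h | h
    · linarith
    · linarith
  have hcgm : (3:ℝ)/2 * L ≤ dist c (g m) := by rw [dist_comm]; exact hgmc
  rw [hc] at A1
  have : 2 * L ≤ dist c (g (g c)) := by
    rcases max_cases (L - L/2) (dist c (g (g c)) - L/2) with ⟨hmx, _⟩ | ⟨hmx, _⟩
    · rw [hmx] at A1; linarith
    · rw [hmx] at A1; linarith
  have hub : dist c (g (g c)) ≤ 2 * L := by
    have := dist_triangle c (g c) (g (g c))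
    rw [hc, hgc2] at this; linarith
  linarith

lemma dist_three (hX : IsRTree X) (g : X ≃ᵢ X) (hL : 0 < translationLength g) {c : X}
    (hc : dist c (g c) = translationLength g) :
    dist c (g (g (g c))) = 3 * translationLength g := by
  set L := translationLength g
  have hgc : dist (g c) (g (g c)) = L := by rw [g.dist_eq]; exact hc
  have h2 := dist_two hX g hL hc
  have h2' : dist (g c) (g (g (g c))) = 2 * L := by rw [g.dist_eq]; exact h2
  have key := lemB hX (a := c) (b := g c) (c := g (g c)) (e := g (g (g c)))
    (by rw [hc, hgc, h2]; ring) (by rw [hgc, h2']; rw [g.dist_eq, g.dist_eq, hc]; ring)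
    (by rw [hgc]; exact hL)
  rw [key, hc, h2']; ring

lemma dist_pow (hX : IsRTree X) (g : X ≃ᵢ X) (hL : 0 < translationLength g) {c : X}
    (hc : dist c (g c) = translationLength g) :
    ∀ n : ℕ, dist c ((g ^ n) c) = n * translationLength g := by
  set L := translationLength g with hLdef
  have key : ∀ n : ℕ, dist c ((g ^ n) c) = n * L ∧ dist c ((g ^ (n+1)) c) = (n+1) * L := by
    intro n
    induction n with
    | zero =>
      constructor
      · simp
      · simpa using hc
    | succ k ih =>
      obtain ⟨ih1, ih2⟩ := ih
      have e1 : ((g ^ (k+1)) c) = (g ^ k) (g c) := by rw [pow_succ]; rfl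
      have e2 : ((g ^ (k+2)) c) = (g ^ k) (g (g c)) := by
        rw [show k + 2 = k + (1 + 1) by ring, pow_add, pow_add, pow_one]; rfl
      have d1 : dist ((g ^ k) c) ((g ^ (k+1)) c) = L := by
        rw [e1, IsometryEquiv.dist_eq]; exact hc
      have d2 : dist ((g ^ k) c) ((g ^ (k+2)) c) = 2 * L := by
        rw [e2, IsometryEquiv.dist_eq]; exact dist_two hX g hL hc
      have d3 : dist ((g ^ (k+1)) c) ((g ^ (k+2)) c) = L := by
        rw [e1, e2, IsometryEquiv.dist_eq, IsometryEquiv.dist_eq]; exact hc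
      have key2 := lemB hX (a := c) (b := (g ^ k) c) (c := (g ^ (k+1)) c) (e := (g ^ (k+2)) c)
        (by rw [ih1, d1, ih2]; push_cast; ring) (by rw [d1, d3, d2]; ring)
        (by rw [d1]; exact hL)
      constructor
      · rw [ih2]; push_cast; ring
      · rw [show k + 1 + 1 = k + 2 from rfl, key2, ih1, d2]; push_cast; ring
  exact fun n => (key n).1

lemma dist_zpow (hX : IsRTree X) (g : X ≃ᵢ X) (hL : 0 < translationLength g) {c : X}
    (hc : dist c (g c) = translationLength g) :
    ∀ j k : ℤ, dist ((g ^ j) c) ((g ^ k) c) = |(j : ℝ) - k| * translationLength g := by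
  have main : ∀ j k : ℤ, j ≤ k →
      dist ((g ^ j) c) ((g ^ k) c) = ((k - j : ℤ) : ℝ) * translationLength g := by
    intro j k hjk
    have e : ∀ m : ℤ, (g ^ (-j)) ((g ^ m) c) = (g ^ (m - j)) c := by
      intro m
      have h : g ^ (-j) * g ^ m = g ^ (m - j) := by
        rw [← zpow_add]; ring_nf
      calc (g ^ (-j)) ((g ^ m) c) = (g ^ (-j) * g ^ m) c := rfl
        _ = (g ^ (m - j)) c := by rw [h]
    have hd := (g ^ (-j)).dist_eq ((g ^ j) c) ((g ^ k) c)
    rw [e j, e k, sub_self] at hd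
    have h0 : ((g ^ (0:ℤ)) c) = c := by norm_num
    rw [h0] at hd
    obtain ⟨n, hn⟩ := Int.eq_ofNat_of_zero_le (by omega : (0:ℤ) ≤ k - j)
    rw [← hd, hn, zpow_natCast, dist_pow hX g hL hc n]
    norm_num
  intro j k
  rcases le_total j k with h | h
  · have hc' : (j:ℝ) ≤ k := by exact_mod_cast h
    rw [main j k h, abs_of_nonpos (by linarith : (j:ℝ) - k ≤ 0)]
    push_cast; ring
  · have hc' : (k:ℝ) ≤ j := by exact_mod_cast h
    rw [dist_comm, main k j h, abs_of_nonneg (by linarith : (0:ℝ) ≤ (j:ℝ) - k)]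
    push_cast; ring


end chain

/-- Eventual slope lemma for unimodal-type sequences. -/
lemma slope {E : ℕ → ℝ} {L : ℝ} (hL : 0 < L) (hE : ∀ n, 0 ≤ E n)
    (hrel : ∀ n : ℕ, E (n+2) = E (n+1) + L ∨ E n = E (n+1) + L) :
    ∃ N : ℕ, ∀ k : ℕ, E (N + k) = E N + k * L := by
  have step : ∀ n : ℕ, E (n+1) ≠ E n - L → E (n+2) = E (n+1) + L := by
    intro n h
    rcases hrel n with h1 | h1
    · exact h1
    · exact absurd (by rw [h1]; ring) h
  have hex : ∃ n₁ : ℕ, E (n₁+1) ≠ E n₁ - L := by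
    by_contra hcon
    push_neg at hcon
    have hdesc : ∀ n : ℕ, E n = E 0 - n * L := by
      intro n
      induction n with
      | zero => simp
      | succ k ih => rw [hcon k, ih]; push_cast; ring
    obtain ⟨n, hn⟩ := exists_nat_gt (E 0 / L)
    have : E 0 / L * L < n * L := by exact mul_lt_mul_of_pos_right hn hL
    rw [div_mul_cancel₀ _ (ne_of_gt hL)] at this
    have := hdesc n
    have := hE n
    linarith
  obtain ⟨n₁, hn₁⟩ := hex
  have main : ∀ k : ℕ, E (n₁ + 1 + k + 1) = E (n₁ + 1 + k) + L := by
    intro k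
    induction k with
    | zero => simpa using step n₁ hn₁
    | succ j ih =>
      have : E (n₁ + 1 + j + 1) ≠ E (n₁ + 1 + j) - L := by
        rw [ih]; intro hcc; linarith
      have h2 := step (n₁ + 1 + j) this
      have e : n₁ + 1 + (j + 1) + 1 = n₁ + 1 + j + 2 := by ring
      rw [e, h2, show n₁ + 1 + (j + 1) = n₁ + 1 + j + 1 from rfl]
  refine ⟨n₁ + 1, fun k => ?_⟩
  induction k with
  | zero => simp
  | succ j ih =>
    have := main j
    rw [show n₁ + 1 + (j + 1) = n₁ + 1 + j + 1 from rfl, this, ih]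
    push_cast; ring

section proj
variable [Nonempty X]

lemma zpow_apply_zpow (g : X ≃ᵢ X) (j k : ℤ) (x : X) :
    (g ^ j) ((g ^ k) x) = (g ^ (j + k)) x := by
  rw [zpow_add]; rfl

lemma inv_apply_zpow (g : X ≃ᵢ X) (k : ℤ) (x : X) :
    g⁻¹ ((g ^ k) x) = (g ^ (k - 1)) x := by
  have : g⁻¹ = g ^ (-1 : ℤ) := by rw [zpow_neg_one]
  rw [this, zpow_apply_zpow]
  congr 1
  ring

lemma proj_half (hX : IsRTree X) (g : X ≃ᵢ X) (hg : IsHyperbolicIsometry g) (w : X) :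
    ∃ c : X, dist c (g c) = translationLength g ∧
      dist w (g w) = 2 * dist w c + translationLength g ∧
      dist w (g c) = dist w c + translationLength g ∧
      dist w (g (g c)) = dist w c + 2 * translationLength g := by
  obtain ⟨hL, a, ha⟩ := hg
  set L := translationLength g with hLdef
  set F : ℤ → ℝ := fun k => dist w ((g ^ k) a) with hF
  have chain := dist_zpow hX g hL ha
  rw [← hLdef] at chain
  have hrelZ : ∀ k : ℤ, F k = max (F (k-1)) (F (k+1)) - L := by
    intro k
    have b1 : dist ((g^(k-1)) a) ((g^k) a) = L := by
      rw [chain]; push_cast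
      rw [show (k:ℝ) - 1 - (k:ℝ) = -1 by ring, abs_neg, abs_one, one_mul]
    have b2 : dist ((g^k) a) ((g^(k+1)) a) = L := by
      rw [chain]; push_cast
      rw [show (k:ℝ) - ((k:ℝ)+1) = -1 by ring, abs_neg, abs_one, one_mul]
    have b3 : dist ((g^(k-1)) a) ((g^(k+1)) a) = 2*L := by
      rw [chain]; push_cast
      rw [show (k:ℝ) - 1 - ((k:ℝ)+1) = -2 by ring, abs_neg]
      norm_num
    have hbet : dist ((g^(k-1)) a) ((g^k) a) + dist ((g^k) a) ((g^(k+1)) a)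
        = dist ((g^(k-1)) a) ((g^(k+1)) a) := by rw [b1, b2, b3]; ring
    have A := lemA hX hbet w
    rw [b1, b2] at A
    exact A.trans (max_sub_sub_right _ _ _)
  have hslope : ∀ (E : ℕ → ℝ), (∀ n : ℕ, E (n+2) = E (n+1) + L ∨ E n = E (n+1) + L) →
      (∀ n, 0 ≤ E n) → ∃ N : ℕ, ∀ k : ℕ, E (N + k) = E N + k * L :=
    fun E hrel hE => slope hL hE hrel
  obtain ⟨N₁, h₁⟩ := hslope (fun n => F n) (by
    intro n
    have h := hrelZ ((n:ℤ)+1)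
    rw [show ((n:ℤ)+1-1) = (n:ℤ) by ring, show ((n:ℤ)+1+1) = ((n:ℤ)+2) by ring] at h
    have hmx : max (F (n:ℤ)) (F ((n:ℤ)+2)) = F ((n:ℤ)+1) + L := by rw [h]; ring
    have c2 : (((n+2:ℕ)):ℤ) = (n:ℤ)+2 := by push_cast; ring
    have c1 : (((n+1:ℕ)):ℤ) = (n:ℤ)+1 := by push_cast; ring
    rcases max_cases (F (n:ℤ)) (F ((n:ℤ)+2)) with ⟨he, _⟩ | ⟨he, _⟩
    · right; show F (n:ℤ) = F _ + L
      rw [c1, ← hmx, he]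
    · left; show F _ = F _ + L
      rw [c1, c2, ← hmx, he]) (fun n => dist_nonneg)
  obtain ⟨N₂, h₂⟩ := hslope (fun n => F (-(n:ℤ))) (by
    intro n
    have h := hrelZ (-(n:ℤ)-1)
    rw [show (-(n:ℤ)-1-1) = (-(n:ℤ)-2) by ring, show (-(n:ℤ)-1+1) = (-(n:ℤ)) by ring] at h
    have hmx : max (F (-(n:ℤ)-2)) (F (-(n:ℤ))) = F (-(n:ℤ)-1) + L := by rw [h]; ring
    have c2 : -((n+2:ℕ):ℤ) = -(n:ℤ)-2 := by push_cast; ring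
    have c1 : -((n+1:ℕ):ℤ) = -(n:ℤ)-1 := by push_cast; ring
    rcases max_cases (F (-(n:ℤ)-2)) (F (-(n:ℤ))) with ⟨he, _⟩ | ⟨he, _⟩
    · left; show F _ = F _ + L
      rw [c1, c2, ← hmx, he]
    · right; show F _ = F _ + L
      rw [c1, ← hmx, he]) (fun n => dist_nonneg)
  set N := N₁ + N₂ with hN
  have hp : ∀ j : ℕ, F ((N:ℤ) + j) = F (N:ℤ) + j * L := by
    intro j
    have e1 : ((N:ℤ) + j) = ((N₁ + (N₂ + j) : ℕ) : ℤ) := by omega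
    have e2 : ((N:ℤ)) = ((N₁ + (N₂ + 0) : ℕ) : ℤ) := by omega
    have v1 := h₁ (N₂ + j)
    have v2 := h₁ (N₂ + 0)
    rw [e1, e2, v1, v2]
    push_cast; ring
  have hm : ∀ j : ℕ, F (-(N:ℤ) - j) = F (-(N:ℤ)) + j * L := by
    intro j
    have e1' : (-(N:ℤ) - j) = -((N₂ + (N₁ + j) : ℕ) : ℤ) := by omega
    have e2 : (-(N:ℤ)) = -((N₂ + (N₁ + 0) : ℕ) : ℤ) := by omega
    have v1 := h₂ (N₁ + j)
    have v2 := h₂ (N₁ + 0)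
    rw [e1', e2, v1, v2]
    push_cast; ring
  set fa := F (N:ℤ) with hfa
  set fb := F (-(N:ℤ)) with hfb
  have idx : ∀ (j : ℕ) (k : ℤ), k = (N:ℤ) + j → F k = fa + j * L := by
    intro j k hk; rw [hk, hp j]
  have idxm : ∀ (j : ℕ) (k : ℤ), k = -(N:ℤ) - j → F k = fb + j * L := by
    intro j k hk; rw [hk, hm j]
  set n : ℤ := (N:ℤ) + 2 with hn
  set P := (g ^ n) a with hP
  set Q := (g ^ (-n)) a with hQ
  have dPQ : dist P Q = (2*N+4) * L := by
    rw [hP, hQ, chain]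
    rw [show ((n:ℝ) - ((-n : ℤ) : ℝ)) = 2*(N:ℝ)+4 by push_cast [hn]; ring]
    rw [abs_of_nonneg (by positivity)]
  have dgw : ∀ k : ℤ, dist (g w) ((g^k) a) = F (k-1) := by
    intro k
    rw [← (g⁻¹).dist_eq, inv_apply_zpow, show g⁻¹ (g w) = w by simp]
  have dg2w : ∀ k : ℤ, dist (g (g w)) ((g^k) a) = F (k-2) := by
    intro k
    rw [← (g⁻¹).dist_eq, inv_apply_zpow, show g⁻¹ (g (g w)) = g w by simp, dgw]
    rw [show (k - 1 - 1 : ℤ) = k - 2 by ring]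
  have FwP : dist w P = fa + 2 * L := by
    have h' := idx 2 n (by omega)
    rw [hP]; rw [show F n = dist w ((g^n) a) from rfl] at h'; rw [h']; norm_num
  have FgwP : dist (g w) P = fa + 1 * L := by
    rw [hP, dgw]
    have h' := idx 1 (n-1) (by omega)
    rw [h']; norm_num
  have Fg2wP : dist (g (g w)) P = fa + 0 * L := by
    rw [hP, dg2w]
    have h' := idx 0 (n-2) (by omega)
    rw [h']; norm_num
  have FwQ : dist w Q = fb + 2 * L := by
    have h' := idxm 2 (-n) (by omega)
    rw [hQ]; rw [show F (-n) = dist w ((g^(-n)) a) from rfl] at h'; rw [h']; norm_num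
  have FgwQ : dist (g w) Q = fb + 3 * L := by
    rw [hQ, dgw]
    have h' := idxm 3 (-n-1) (by omega)
    rw [h']; norm_num
  have Fg2wQ : dist (g (g w)) Q = fb + 4 * L := by
    rw [hQ, dg2w]
    have h' := idxm 4 (-n-2) (by omega)
    rw [h']; norm_num
  have hNcast : (0:ℝ) ≤ (N:ℝ) := Nat.cast_nonneg N
  have I1 := hX.2 w (g w) P Q
  have I2 := hX.2 w P (g w) Q
  have I3 := hX.2 w (g (g w)) P Q
  have I4 := hX.2 w P (g (g w)) Q
  rw [dPQ, FwP, FgwQ, FwQ, FgwP] at I1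
  have hρ₁ : dist w (g w) + (2*(N:ℝ)+4) * L = fa + fb + 5 * L := by
    have hup : dist w (g w) + (2*(N:ℝ)+4) * L ≤ fa + fb + 5 * L := by
      rcases le_max_iff.1 I1 with h | h
      · linarith
      · linarith
    have hcomm1 : dist P (g w) = fa + 1 * L := by rw [dist_comm]; exact FgwP
    rw [FwP, FgwQ, dPQ, FwQ, hcomm1] at I2
    have hlo : fa + fb + 5 * L ≤ dist w (g w) + (2*(N:ℝ)+4) * L := by
      rcases le_max_iff.1 I2 with h | h
      · linarith
      · linarith
    linarith
  rw [dPQ, FwP, Fg2wQ, FwQ, Fg2wP] at I3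
  have hρ₂ : dist w (g (g w)) + (2*(N:ℝ)+4) * L = fa + fb + 6 * L := by
    have hup : dist w (g (g w)) + (2*(N:ℝ)+4) * L ≤ fa + fb + 6 * L := by
      rcases le_max_iff.1 I3 with h | h
      · linarith
      · linarith
    have hcomm1 : dist P (g (g w)) = fa + 0 * L := by rw [dist_comm]; exact Fg2wP
    rw [FwP, Fg2wQ, dPQ, FwQ, hcomm1] at I4
    have hlo : fa + fb + 6 * L ≤ dist w (g (g w)) + (2*(N:ℝ)+4) * L := by
      rcases le_max_iff.1 I4 with h | h
      · linarith
      · linarith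
    linarith
  have hsum : dist w (g (g w)) = dist w (g w) + L := by linarith
  -- midpoint construction
  set ρ := dist w (g w) with hρ
  have hLρ : L ≤ ρ := tl_le g w
  set t : ℝ := (ρ - L) / 2 with htdef
  have ht0 : 0 ≤ t := by rw [htdef]; linarith
  have ht1 : t ≤ dist w (g w) := by rw [htdef]; show _ ≤ ρ; linarith
  obtain ⟨y, hm1, hm2⟩ := exists_between hX w (g w) ht0 ht1
  have hm2' : dist y (g w) = ρ - t := hm2
  have himg1 : dist (g w) (g y) = t := by rw [g.dist_eq]; exact hm1
  have himg2 : dist (g y) (g (g w)) = ρ - t := by rw [g.dist_eq]; exact hm2'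
  have hgwg2w : dist (g w) (g (g w)) = ρ := by rw [g.dist_eq]
  have hbet_w : dist w y + dist y (g w) = dist w (g w) := by rw [hm1, hm2']; show _ = ρ; ring
  have hbet_g : dist (g w) (g y) + dist (g y) (g (g w)) = dist (g w) (g (g w)) := by
    rw [himg1, himg2, hgwg2w]; ring
  have hρt : ρ = 2 * t + L := by rw [htdef]; ring
  have A_y2 := lemA hX hbet_w (g (g w))
  rw [hm1, hm2'] at A_y2
  have dg2ww : dist (g (g w)) w = ρ + L := by rw [dist_comm, hsum]
  have dg2wgw : dist (g (g w)) (g w) = ρ := by rw [dist_comm]; exact hgwg2w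
  rw [dg2ww, dg2wgw] at A_y2
  have dy_g2w : dist y (g (g w)) = t + 2 * L := by
    rw [dist_comm, A_y2]
    rw [max_eq_left (by linarith)]
    linarith
  have A_ygy := lemA hX hbet_g y
  rw [himg1, himg2] at A_ygy
  rw [hm2', dy_g2w] at A_ygy
  have dyy : dist y (g y) = L := by
    rw [A_ygy, hρt]
    rw [show 2 * t + L - t - t = L by ring, show t + 2*L - (2*t+L-t) = L by ring, max_self]
  have A_wgy := lemA hX hbet_g w
  rw [himg1, himg2] at A_wgy
  rw [hsum] at A_wgy
  have dw_gy : dist w (g y) = t + L := by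
    rw [A_wgy, show ρ + L - (ρ - t) = t + L by ring,
      show ρ - t = t + L by rw [hρt]; ring, max_self]
  have dy2 := dist_two hX g hL dyy
  have dgy2 : dist (g y) (g (g y)) = L := by rw [g.dist_eq]; exact dyy
  have key := lemB hX (a := w) (b := y) (c := g y) (e := g (g y))
    (by rw [hm1, dyy, dw_gy]) (by rw [dyy, dgy2, dy2]; ring) (by rw [dyy]; exact hL)
  exact ⟨y, dyy, by rw [hm1]; exact hρt, by rw [dw_gy, hm1], by rw [key, dy2, hm1]⟩

lemma proj (hX : IsRTree X) (g : X ≃ᵢ X) (hg : IsHyperbolicIsometry g) (w : X) :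
    ∃ c : X, dist c (g c) = translationLength g ∧
      dist w (g w) = 2 * dist w c + translationLength g ∧
      dist w (g c) = dist w c + translationLength g ∧
      dist w (g⁻¹ c) = dist w c + translationLength g ∧
      dist w (g (g c)) = dist w c + 2 * translationLength g ∧
      dist w (g⁻¹ (g⁻¹ c)) = dist w c + 2 * translationLength g := by
  have hL : 0 < translationLength g := hg.1
  obtain ⟨y, hy1, hy2, hy3, hy4⟩ := proj_half hX g hg w
  obtain ⟨z, hz1, hz2, hz3, hz4⟩ := proj_half hX g⁻¹ (hyp_inv hg) w
  rw [tl_inv] at hz1 hz2 hz3 hz4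
  have hρinv : dist w (g⁻¹ w) = dist w (g w) := by rw [dist_apply_inv, dist_comm]
  rw [hρinv] at hz2
  have hwz : dist w z = dist w y := by rw [hy2] at hz2; linarith
  have hzgz : dist z (g z) = translationLength g := by
    rw [← hz1, dist_apply_inv, dist_comm]
  have hygw : dist y (g w) = dist w (g w) - dist w y := by
    have hub : dist y (g w) ≤ translationLength g + dist w y := by
      have htri := dist_triangle y (g y) (g w)
      have heq : dist (g y) (g w) = dist y w := g.dist_eq y w
      rw [hy1] at htri
      rw [heq, dist_comm y w] at htri
      linarith
    have hlb := dist_triangle w y (g w)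
    rw [hy2]; linarith
  have hbet : dist w y + dist y (g w) = dist w (g w) := by rw [hygw]; ring
  have hzy : z = y := by
    have A := lemA hX hbet z
    have d1 : dist z w = dist w y := by rw [dist_comm]; exact hwz
    have d2 : dist z (g w) ≤ translationLength g + dist w y := by
      have htri := dist_triangle z (g z) (g w)
      have e : dist (g z) (g w) = dist z w := g.dist_eq z w
      rw [hzgz, e, d1] at htri
      linarith
    have hd0 : dist z y ≤ 0 := by
      rw [A, d1, hygw, hy2]
      apply max_le <;> linarith
    exact dist_le_zero.1 hd0
  rw [hzy] at hz3 hz4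
  rw [hwz] at hz2
  exact ⟨y, hy1, hy2, hy3, hz3, hy4, hz4⟩

/-- Any two points on the axis: directions from one towards the other. -/
lemma L8 (hX : IsRTree X) (h' : X ≃ᵢ X) (hL : 0 < translationLength h') {z q : X}
    (hz : dist z (h' z) = translationLength h') (hq : dist q (h' q) = translationLength h')
    (hne : z ≠ q) : 0 < gp q z (h' q) ∨ 0 < gp q z (h'⁻¹ q) := by
  by_contra hcon
  push_neg at hcon
  obtain ⟨h1, h2⟩ := hcon
  have e1 := (gp_eq_zero_iff q z (h' q)).1 (le_antisymm h1 (gp_nonneg _ _ _))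
  have e2 := (gp_eq_zero_iff q z (h'⁻¹ q)).1 (le_antisymm h2 (gp_nonneg _ _ _))
  have r : 0 < dist z q := dist_pos.2 hne
  have hqinv : dist q (h'⁻¹ q) = translationLength h' := by
    rw [dist_apply_inv, dist_comm]; exact hq
  have d3 : dist z (h'⁻¹ q) = dist (h' z) q := dist_apply_inv h' z q
  have d4 : dist (h' q) (h' z) = dist q z := h'.dist_eq q z
  have c1 : dist (h' q) q = dist q (h' q) := dist_comm _ _
  have c2 : dist q z = dist z q := dist_comm _ _
  have I := hX.2 z (h' q) (h' z) q
  rcases le_max_iff.1 I with h | h <;> linarith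

/-- Combinatorial ping-pong for free semigroups. -/
lemma comb (g' h' : X ≃ᵢ X) (U V : Set X) (c : X)
    (hU : ∀ x, x ∈ U ∪ V → g' x ∈ U) (hV : ∀ x, x ∈ U ∪ V → h' x ∈ V)
    (hdisj : ∀ x, x ∈ U → x ∈ V → False)
    (hgc : g' c ∈ U) (hhc : h' c ∈ V) (hcU : c ∉ U) (hcV : c ∉ V) :
    Function.Injective ⇑(FreeSemigroup.lift ![g', h']) := by
  set f : Fin 2 → (X ≃ᵢ X) := ![g', h'] with hf
  set Lf := FreeSemigroup.lift f with hLf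
  have f0 : f 0 = g' := rfl
  have f1 : f 1 = h' := rfl
  have fin2 : ∀ i : Fin 2, i = 0 ∨ i = 1 := by decide
  have claim : ∀ w : FreeSemigroup (Fin 2),
      ((Lf w) c ∈ U ∪ V) ∧ (w.head = 0 → (Lf w) c ∈ U) ∧ (w.head = 1 → (Lf w) c ∈ V) := by
    intro w
    induction w using FreeSemigroup.recOnMul with
    | ih1 i =>
      have hof : Lf (FreeSemigroup.of i) = f i := by rw [hLf, FreeSemigroup.lift_of]
      have hhead : (FreeSemigroup.of i).head = i := rfl
      rcases fin2 i with rfl | rfl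
      · rw [hof, f0, hhead]
        exact ⟨Or.inl hgc, fun _ => hgc, fun h => by simp at h⟩
      · rw [hof, f1, hhead]
        exact ⟨Or.inr hhc, fun h => by simp at h, fun _ => hhc⟩
    | ih2 x y ihx ihy =>
      have hmul : Lf (FreeSemigroup.of x * y) = f x * Lf y := by
        rw [hLf, map_mul, FreeSemigroup.lift_of]
      have happ : (Lf (FreeSemigroup.of x * y)) c = (f x) ((Lf y) c) := by rw [hmul]; rfl
      have hhead : (FreeSemigroup.of x * y).head = x := rfl
      have hin := ihy.1
      rcases fin2 x with rfl | rfl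
      · rw [happ, f0, hhead]
        exact ⟨Or.inl (hU _ hin), fun _ => hU _ hin, fun h => by simp at h⟩
      · rw [happ, f1, hhead]
        exact ⟨Or.inr (hV _ hin), fun h => by simp at h, fun _ => hV _ hin⟩
  have hfirst : ∀ w₁ w₂ : FreeSemigroup (Fin 2), Lf w₁ = Lf w₂ → w₁.head = w₂.head := by
    intro w₁ w₂ he
    have hc : (Lf w₁) c = (Lf w₂) c := by rw [he]
    rcases fin2 w₁.head with h1 | h1 <;> rcases fin2 w₂.head with h2 | h2 <;>
      rw [h1, h2]
    · exfalso
      have u1 := (claim w₁).2.1 h1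
      have u2 := (claim w₂).2.2 h2
      rw [hc] at u1
      exact hdisj _ u1 u2
    · exfalso
      have u1 := (claim w₁).2.2 h1
      have u2 := (claim w₂).2.1 h2
      rw [hc] at u1
      exact hdisj _ u2 u1
  have main : ∀ (l₁ : List (Fin 2)) (i₁ i₂ : Fin 2) (l₂ : List (Fin 2)),
      Lf ⟨i₁, l₁⟩ = Lf ⟨i₂, l₂⟩ → i₁ = i₂ ∧ l₁ = l₂ := by
    intro l₁
    induction l₁ with
    | nil =>
      intro i₁ i₂ l₂ he
      have hh : i₁ = i₂ := hfirst _ _ he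
      subst hh
      cases l₂ with
      | nil => exact ⟨rfl, rfl⟩
      | cons x t =>
        exfalso
        have hdecomp : Lf ⟨i₁, x :: t⟩ = f i₁ * Lf ⟨x, t⟩ := by
          rw [show (⟨i₁, x :: t⟩ : FreeSemigroup (Fin 2)) = FreeSemigroup.of i₁ * ⟨x, t⟩ from rfl,
            hLf, map_mul, FreeSemigroup.lift_of]
        have hone : Lf ⟨i₁, ([] : List (Fin 2))⟩ = f i₁ := by
          rw [show (⟨i₁, ([] : List (Fin 2))⟩ : FreeSemigroup (Fin 2)) = FreeSemigroup.of i₁ from rfl,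
            hLf, FreeSemigroup.lift_of]
        rw [hone, hdecomp] at he
        have : (1 : X ≃ᵢ X) = Lf ⟨x, t⟩ := by
          have := mul_left_cancel (a := f i₁) (b := (1 : X ≃ᵢ X)) (c := Lf ⟨x, t⟩)
            (by rw [mul_one]; exact he)
          exact this
        have hmem := (claim ⟨x, t⟩).1
        rw [← this] at hmem
        have : (1 : X ≃ᵢ X) c = c := rfl
        rw [this] at hmem
        rcases hmem with h | h
        · exact hcU h
        · exact hcV h
    | cons x₁ t₁ ih =>
      intro i₁ i₂ l₂ he
      have hh : i₁ = i₂ := hfirst _ _ he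
      subst hh
      cases l₂ with
      | nil =>
        exfalso
        have hdecomp : Lf ⟨i₁, x₁ :: t₁⟩ = f i₁ * Lf ⟨x₁, t₁⟩ := by
          rw [show (⟨i₁, x₁ :: t₁⟩ : FreeSemigroup (Fin 2)) = FreeSemigroup.of i₁ * ⟨x₁, t₁⟩ from rfl,
            hLf, map_mul, FreeSemigroup.lift_of]
        have hone : Lf ⟨i₁, ([] : List (Fin 2))⟩ = f i₁ := by
          rw [show (⟨i₁, ([] : List (Fin 2))⟩ : FreeSemigroup (Fin 2)) = FreeSemigroup.of i₁ from rfl,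
            hLf, FreeSemigroup.lift_of]
        rw [hone, hdecomp] at he
        have h1 : (1 : X ≃ᵢ X) = Lf ⟨x₁, t₁⟩ :=
          mul_left_cancel (a := f i₁) (by rw [mul_one]; exact he.symm)
        have hmem := (claim ⟨x₁, t₁⟩).1
        rw [← h1] at hmem
        have : (1 : X ≃ᵢ X) c = c := rfl
        rw [this] at hmem
        rcases hmem with h | h
        · exact hcU h
        · exact hcV h
      | cons x₂ t₂ =>
        have hd1 : Lf ⟨i₁, x₁ :: t₁⟩ = f i₁ * Lf ⟨x₁, t₁⟩ := by
          rw [show (⟨i₁, x₁ :: t₁⟩ : FreeSemigroup (Fin 2)) = FreeSemigroup.of i₁ * ⟨x₁, t₁⟩ from rfl,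
            hLf, map_mul, FreeSemigroup.lift_of]
        have hd2 : Lf ⟨i₁, x₂ :: t₂⟩ = f i₁ * Lf ⟨x₂, t₂⟩ := by
          rw [show (⟨i₁, x₂ :: t₂⟩ : FreeSemigroup (Fin 2)) = FreeSemigroup.of i₁ * ⟨x₂, t₂⟩ from rfl,
            hLf, map_mul, FreeSemigroup.lift_of]
        rw [hd1, hd2] at he
        have he' : Lf ⟨x₁, t₁⟩ = Lf ⟨x₂, t₂⟩ := mul_left_cancel he
        obtain ⟨e1, e2⟩ := ih x₁ x₂ t₂ he'
        subst e1; subst e2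
        exact ⟨rfl, rfl⟩
  intro w₁ w₂ he
  obtain ⟨i₁, l₁⟩ := w₁
  obtain ⟨i₂, l₂⟩ := w₂
  obtain ⟨e1, e2⟩ := main l₁ i₁ i₂ l₂ he
  subst e1; subst e2
  rfl

lemma chain_facts (hX : IsRTree X) (g' : X ≃ᵢ X) (hL : 0 < translationLength g') {c : X}
    (hc : dist c (g' c) = translationLength g') :
    dist c (g'⁻¹ c) = translationLength g' ∧
    dist c (g' (g' c)) = 2 * translationLength g' ∧
    dist c (g'⁻¹ (g'⁻¹ c)) = 2 * translationLength g' ∧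
    dist (g' c) (g'⁻¹ (g'⁻¹ c)) = 3 * translationLength g' ∧
    dist (g'⁻¹ c) (g' c) = 2 * translationLength g' := by
  set L := translationLength g' with hLdef
  have hcinv : dist c (g'⁻¹ c) = L := by rw [dist_apply_inv, dist_comm]; exact hc
  have hcinv' : dist c (g'⁻¹ c) = translationLength g'⁻¹ := by rw [tl_inv]; exact hcinv
  have hLinv : 0 < translationLength g'⁻¹ := by rw [tl_inv]; exact hL
  have h2 := dist_two hX g' hL hc
  have h2' := dist_two hX g'⁻¹ hLinv hcinv'
  rw [tl_inv] at h2'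
  have h3' := dist_three hX g'⁻¹ hLinv hcinv'
  rw [tl_inv] at h3'
  refine ⟨hcinv, h2, h2', ?_, ?_⟩
  · have e : dist (g' c) (g'⁻¹ (g'⁻¹ c)) = dist c (g'⁻¹ (g'⁻¹ (g'⁻¹ c))) := by
      rw [← g'⁻¹.dist_eq]
      congr 1
      simp
    rw [e]; exact h3'
  · have e : dist (g'⁻¹ c) (g' c) = dist c (g' (g' c)) := by
      rw [← g'.dist_eq]
      congr 1
      simp
    rw [e]; exact h2

/-- The geometric ping-pong lemma. -/
lemma geom (hX : IsRTree X) (g' h' : X ≃ᵢ X) {lg lh : ℝ} (hlg : 0 < lg) (hlh : 0 < lh)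
    (c q : X)
    (c1 : dist c (g' c) = lg)
    (c1' : dist c (g'⁻¹ c) = lg)
    (c2' : dist c (g'⁻¹ (g'⁻¹ c)) = 2*lg)
    (c3 : dist (g' c) (g'⁻¹ (g'⁻¹ c)) = 3*lg)
    (cmid : dist (g'⁻¹ c) (g' c) = 2*lg)
    (q1 : dist q (h' q) = lh)
    (q1' : dist q (h'⁻¹ q) = lh)
    (q2' : dist q (h'⁻¹ (h'⁻¹ q)) = 2*lh)
    (q3 : dist (h' q) (h'⁻¹ (h'⁻¹ q)) = 3*lh)
    (qmid : dist (h'⁻¹ q) (h' q) = 2*lh)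
    (e1 : dist c (h' q) = dist c q + lh)
    (e2 : dist c (h'⁻¹ q) = dist c q + lh)
    (e3 : dist c (h'⁻¹ (h'⁻¹ q)) = dist c q + 2*lh)
    (s1 : dist (g' c) (h' q) = lg + dist c q + lh)
    (s2 : dist (g'⁻¹ (g'⁻¹ c)) (h' q) = 2*lg + dist c q + lh)
    (s3 : dist (g' c) (h'⁻¹ (h'⁻¹ q)) = lg + dist c q + 2*lh) :
    Function.Injective ⇑(FreeSemigroup.lift ![g', h']) := by
  set D := dist c q with hD
  set U : Set X := {x | dist x c = dist x (g' c) + lg} with hU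
  set V : Set X := {x | dist x q = dist x (h' q) + lh} with hV
  -- generic facts
  have hDnn : 0 ≤ D := dist_nonneg
  -- key step for U-invariance
  have key_g : ∀ x : X, dist x (g'⁻¹ (g'⁻¹ c)) = dist x c + 2*lg → g' x ∈ U := by
    intro x hx2
    have hbet : dist (g'⁻¹ c) c + dist c (g' c) = dist (g'⁻¹ c) (g' c) := by
      rw [dist_comm (g'⁻¹ c) c, c1', c1, cmid]; ring
    have A := lemA hX hbet (g' x)
    have j1 : dist (g' x) (g'⁻¹ c) = dist x (g'⁻¹ (g'⁻¹ c)) := by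
      rw [← g'⁻¹.dist_eq]
      congr 1
      simp
    have j2 : dist (g' x) (g' c) = dist x c := g'.dist_eq x c
    rw [j1, j2, dist_comm (g'⁻¹ c) c, c1', c1] at A
    rw [hx2] at A
    have : dist (g' x) c = dist x c + lg := by
      rw [A, max_eq_left (by linarith)]
      ring
    show dist (g' x) c = dist (g' x) (g' c) + lg
    rw [this, j2]
  have key_h : ∀ x : X, dist x (h'⁻¹ (h'⁻¹ q)) = dist x q + 2*lh → h' x ∈ V := by
    intro x hx2
    have hbet : dist (h'⁻¹ q) q + dist q (h' q) = dist (h'⁻¹ q) (h' q) := by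
      rw [dist_comm (h'⁻¹ q) q, q1', q1, qmid]; ring
    have A := lemA hX hbet (h' x)
    have j1 : dist (h' x) (h'⁻¹ q) = dist x (h'⁻¹ (h'⁻¹ q)) := by
      rw [← h'⁻¹.dist_eq]
      congr 1
      simp
    have j2 : dist (h' x) (h' q) = dist x q := h'.dist_eq x q
    rw [j1, j2, dist_comm (h'⁻¹ q) q, q1', q1] at A
    rw [hx2] at A
    have : dist (h' x) q = dist x q + lh := by
      rw [A, max_eq_left (by linarith)]
      ring
    show dist (h' x) q = dist (h' x) (h' q) + lh
    rw [this, j2]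
  -- U ∪ V is mapped into U by g'
  have hUstep : ∀ x, x ∈ U ∪ V → g' x ∈ U := by
    rintro x (hx | hx)
    · -- x ∈ U
      have hx' : dist x c = dist x (g' c) + lg := hx
      have hB := lemB hX (a := x) (b := g' c) (c := c) (e := g'⁻¹ (g'⁻¹ c))
        (by rw [dist_comm (g' c) c, c1]; linarith)
        (by rw [dist_comm (g' c) c, c1, c2', c3]; ring)
        (by rw [dist_comm (g' c) c, c1]; exact hlg)
      apply key_g
      rw [hB, c3, hx']; ring
    · -- x ∈ V
      have hx' : dist x q = dist x (h' q) + lh := hx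
      have dq2 : dist q (g'⁻¹ (g'⁻¹ c)) = D + 2*lg := by
        have hub : dist q (g'⁻¹ (g'⁻¹ c)) ≤ D + 2*lg := by
          have := dist_triangle q c (g'⁻¹ (g'⁻¹ c))
          rw [c2', dist_comm q c] at this
          linarith
        have hlb : 2*lg + D + lh - lh ≤ dist q (g'⁻¹ (g'⁻¹ c)) := by
          have := dist_triangle (h' q) q (g'⁻¹ (g'⁻¹ c))
          rw [dist_comm (h' q) q, q1] at this
          have hs2' : dist (h' q) (g'⁻¹ (g'⁻¹ c)) = 2*lg + D + lh := by
            rw [dist_comm]; exact s2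
          linarith
        linarith
      have hB := lemB hX (a := x) (b := h' q) (c := q) (e := g'⁻¹ (g'⁻¹ c))
        (by rw [dist_comm (h' q) q, q1]; linarith)
        (by rw [dist_comm (h' q) q, q1, dq2, dist_comm (h' q) (g'⁻¹ (g'⁻¹ c))]
            rw [s2]; ring)
        (by rw [dist_comm (h' q) q, q1]; exact hlh)
      have hs2' : dist (h' q) (g'⁻¹ (g'⁻¹ c)) = 2*lg + D + lh := by rw [dist_comm]; exact s2
      have hxc : dist x c = dist x (h' q) + lh + D := by
        have hub : dist x c ≤ dist x (h' q) + lh + D := by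
          have := dist_triangle x (h' q) c
          have e1' : dist (h' q) c = D + lh := by rw [dist_comm]; exact e1
          linarith
        have hlb : dist x (g'⁻¹ (g'⁻¹ c)) - 2*lg ≤ dist x c := by
          have := dist_triangle x c (g'⁻¹ (g'⁻¹ c))
          rw [c2'] at this
          linarith
        rw [hB, hs2'] at hlb
        linarith
      apply key_g
      rw [hB, hs2', hxc]; ring
  have hVstep : ∀ x, x ∈ U ∪ V → h' x ∈ V := by
    rintro x (hx | hx)
    · -- x ∈ U
      have hx' : dist x c = dist x (g' c) + lg := hx
      have dc2 : dist c (h'⁻¹ (h'⁻¹ q)) = D + 2*lh := e3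
      have hB := lemB hX (a := x) (b := g' c) (c := c) (e := h'⁻¹ (h'⁻¹ q))
        (by rw [dist_comm (g' c) c, c1]; linarith)
        (by rw [dist_comm (g' c) c, c1, dc2, s3]; ring)
        (by rw [dist_comm (g' c) c, c1]; exact hlg)
      have hxq : dist x q = dist x (g' c) + lg + D := by
        have hub : dist x q ≤ dist x (g' c) + lg + D := by
          have t1 := dist_triangle x c q
          have t2 := dist_triangle x (g' c) c
          have : dist (g' c) c = lg := by rw [dist_comm]; exact c1
          linarith
        have hlb : dist x (h'⁻¹ (h'⁻¹ q)) - 2*lh ≤ dist x q := by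
          have := dist_triangle x q (h'⁻¹ (h'⁻¹ q))
          rw [q2'] at this
          linarith
        rw [hB, s3] at hlb
        linarith
      apply key_h
      rw [hB, s3, hxq]; ring
    · -- x ∈ V
      have hx' : dist x q = dist x (h' q) + lh := hx
      have hB := lemB hX (a := x) (b := h' q) (c := q) (e := h'⁻¹ (h'⁻¹ q))
        (by rw [dist_comm (h' q) q, q1]; linarith)
        (by rw [dist_comm (h' q) q, q1, q2', q3]; ring)
        (by rw [dist_comm (h' q) q, q1]; exact hlh)
      apply key_h
      rw [hB, q3, hx']; ring
  have hdisj : ∀ x, x ∈ U → x ∈ V → False := by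
    intro x hxU hxV
    have hxU' : dist x c = dist x (g' c) + lg := hxU
    have hxV' : dist x q = dist x (h' q) + lh := hxV
    have hB := lemB hX (a := x) (b := g' c) (c := c) (e := h' q)
      (by rw [dist_comm (g' c) c, c1]; linarith)
      (by rw [dist_comm (g' c) c, c1, e1, s1]; ring)
      (by rw [dist_comm (g' c) c, c1]; exact hlg)
    rw [s1] at hB
    have ht : dist x q ≤ dist x c + D := by
      have := dist_triangle x c q
      linarith
    linarith
  have hgcU : g' c ∈ U := by
    show dist (g' c) c = dist (g' c) (g' c) + lg
    rw [dist_self, dist_comm, c1]; ring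
  have hhcV : h' c ∈ V := by
    show dist (h' c) q = dist (h' c) (h' q) + lh
    have j1 : dist (h' c) q = dist c (h'⁻¹ q) := (dist_apply_inv h' c q).symm
    have j2 : dist (h' c) (h' q) = dist c q := h'.dist_eq c q
    rw [j1, j2, e2]
  have hcU : c ∉ U := by
    intro hc
    have : dist c c = dist c (g' c) + lg := hc
    rw [dist_self, c1] at this
    linarith
  have hcV : c ∉ V := by
    intro hc
    have : dist c q = dist c (h' q) + lh := hc
    rw [e1] at this
    linarith
  exact comb g' h' U V c hUstep hVstep hdisj hgcU hhcV hcU hcV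

lemma gp_val (c x y : X) : gp c x y = (dist x c + dist y c - dist x y)/2 := rfl

lemma gp_step (hX : IsRTree X) (c x y z : X) (hpos : 0 < gp c x y) (hz : gp c x z = 0) :
    gp c y z = 0 := by
  have hmin := gp_min hX c x y z
  rw [hz] at hmin
  rcases min_le_iff.1 hmin with h | h
  · linarith
  · exact le_antisymm h (gp_nonneg _ _ _)

lemma main_pp (hX : IsRTree X) (g h : X ≃ᵢ X) (hg : IsHyperbolicIsometry g)
    (hh : IsHyperbolicIsometry h)
    (hpt : ∃ q₀, q₀ ∈ axisOf h ∧ q₀ ∉ axisOf g) :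
    ∃ ε δ : Bool, Function.Injective ⇑(FreeSemigroup.lift ![cond ε g g⁻¹, cond δ h h⁻¹]) := by
  obtain ⟨q₀, hq₀B, hq₀A⟩ := hpt
  have hq₀B : dist q₀ (h q₀) = translationLength h := hq₀B
  have hq₀A : ¬ dist q₀ (g q₀) = translationLength g := hq₀A
  have hlg : 0 < translationLength g := hg.1
  have hlh : 0 < translationLength h := hh.1
  obtain ⟨c, hcax, hRdef, a1, a2, a3, a4⟩ := proj hX g hg q₀
  have hRne : dist q₀ c ≠ 0 := by
    intro h0
    have hqc : q₀ = c := dist_eq_zero.1 h0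
    exact hq₀A (by rw [hqc]; exact hcax)
  have hRpos : 0 < dist q₀ c := lt_of_le_of_ne dist_nonneg (Ne.symm hRne)
  obtain ⟨q, hqax, hDdef, b1, b2, b3, b4⟩ := proj hX h hh c
  obtain ⟨gc1', gc2, gc2', gc3, gcmid⟩ := chain_facts hX g hlg hcax
  obtain ⟨hq1', hq2, hq2', hq3, hqmid⟩ := chain_facts hX h hlh hqax
  have zq0g : gp c q₀ (g c) = 0 := (gp_eq_zero_iff c q₀ (g c)).2 (by rw [a1, hcax])
  have zq0g' : gp c q₀ (g⁻¹ c) = 0 := (gp_eq_zero_iff c q₀ (g⁻¹ c)).2 (by rw [a2, gc1'])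
  have sel : ∃ ε δ : Bool,
      gp c ((cond ε g g⁻¹) c) ((cond δ h h⁻¹) q) = 0 ∧
      gp c ((cond ε g g⁻¹)⁻¹ c) ((cond δ h h⁻¹) q) = 0 ∧
      gp c ((cond ε g g⁻¹) c) ((cond δ h h⁻¹)⁻¹ q) = 0 := by
    rcases eq_or_lt_of_le (dist_nonneg : 0 ≤ dist c q) with hD0 | hDpos
    · -- intersecting case : c = q
      obtain rfl : c = q := dist_eq_zero.1 hD0.symm
      have zAA : gp c (g c) (g⁻¹ c) = 0 := by
        apply (gp_eq_zero_iff c (g c) (g⁻¹ c)).2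
        rw [dist_comm (g c) (g⁻¹ c), gcmid, dist_comm (g c) c, hcax, gc1']; ring
      have zBB : gp c (h c) (h⁻¹ c) = 0 := by
        apply (gp_eq_zero_iff c (h c) (h⁻¹ c)).2
        rw [dist_comm (h c) (h⁻¹ c), hqmid, dist_comm (h c) c, hqax, hq1']; ring
      have hne : q₀ ≠ c := by
        intro hqe; exact hRne (by rw [hqe, dist_self])
      rcases L8 hX h hlh hq₀B hqax hne with hτ | hτ
      · -- q₀ points in the (h c) direction
        have z1 : gp c (h c) (g c) = 0 := gp_step hX c q₀ (h c) (g c) hτ zq0g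
        have z2 : gp c (h c) (g⁻¹ c) = 0 := gp_step hX c q₀ (h c) (g⁻¹ c) hτ zq0g'
        have z1' := (gp_comm c (h c) (g c)) ▸ z1
        have z2' := (gp_comm c (h c) (g⁻¹ c)) ▸ z2
        have hcross := gp_min hX c (g c) (h⁻¹ c) (g⁻¹ c)
        rw [zAA] at hcross
        rcases min_le_iff.1 hcross with hcr | hcr
        · refine ⟨true, true, ?_, ?_, ?_⟩
          · exact (gp_comm c (g c) (h c)) ▸ z1
          · exact (gp_comm c (g⁻¹ c) (h c)) ▸ z2
          · exact le_antisymm hcr (gp_nonneg _ _ _)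
        · refine ⟨false, true, ?_, ?_, ?_⟩
          · exact (gp_comm c (g⁻¹ c) (h c)) ▸ z2
          · show gp c ((g⁻¹)⁻¹ c) (h c) = 0
            rw [inv_inv]
            exact (gp_comm c (g c) (h c)) ▸ z1
          · have : gp c (h⁻¹ c) (g⁻¹ c) = 0 := le_antisymm hcr (gp_nonneg _ _ _)
            exact (gp_comm c (h⁻¹ c) (g⁻¹ c)) ▸ this
      · -- q₀ points in the (h⁻¹ c) direction
        have z1 : gp c (h⁻¹ c) (g c) = 0 := gp_step hX c q₀ (h⁻¹ c) (g c) hτ zq0g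
        have z2 : gp c (h⁻¹ c) (g⁻¹ c) = 0 := gp_step hX c q₀ (h⁻¹ c) (g⁻¹ c) hτ zq0g'
        have hcross := gp_min hX c (g c) (h c) (g⁻¹ c)
        have zAA' : gp c (g c) (g⁻¹ c) = 0 := zAA
        rw [zAA'] at hcross
        rcases min_le_iff.1 hcross with hcr | hcr
        · refine ⟨true, false, ?_, ?_, ?_⟩
          · exact (gp_comm c (h⁻¹ c) (g c)) ▸ z1
          · exact (gp_comm c (h⁻¹ c) (g⁻¹ c)) ▸ z2
          · show gp c (g c) ((h⁻¹)⁻¹ c) = 0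
            rw [inv_inv]
            exact le_antisymm hcr (gp_nonneg _ _ _)
        · refine ⟨false, false, ?_, ?_, ?_⟩
          · exact (gp_comm c (h⁻¹ c) (g⁻¹ c)) ▸ z2
          · show gp c ((g⁻¹)⁻¹ c) (h⁻¹ c) = 0
            rw [inv_inv]
            exact (gp_comm c (h⁻¹ c) (g c)) ▸ z1
          · show gp c (g⁻¹ c) ((h⁻¹)⁻¹ c) = 0
            rw [inv_inv]
            have : gp c (h c) (g⁻¹ c) = 0 := le_antisymm hcr (gp_nonneg _ _ _)
            exact (gp_comm c (h c) (g⁻¹ c)) ▸ this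
    · -- separated case : dist c q > 0, all four products vanish
      have zpos : 0 < gp c q₀ q := by
        have hval : gp c q₀ q = dist c q := by
          by_cases hqq : q₀ = q
          · subst hqq
            show (dist q₀ c + dist q₀ c - dist q₀ q₀)/2 = dist c q₀
            rw [dist_self, dist_comm q₀ c]
            ring
          · rcases L8 hX h hlh hq₀B hqax hqq with hτ | hτ
            · have zqc : gp q c (h q) = 0 := (gp_eq_zero_iff q c (h q)).2 (by rw [b1, hqax])
              have : gp q c q₀ = 0 := by
                have hmin := gp_min hX q c q₀ (h q)
                rw [zqc] at hmin
                rcases min_le_iff.1 hmin with hcr | hcr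
                · exact le_antisymm hcr (gp_nonneg _ _ _)
                · exfalso; linarith
              have e := (gp_eq_zero_iff q c q₀).1 this
              show (dist q₀ c + dist q c - dist q₀ q)/2 = dist c q
              have c1 := dist_comm q₀ c
              have c2 := dist_comm q c
              have c3 := dist_comm q₀ q
              linarith
            · have zqc : gp q c (h⁻¹ q) = 0 := (gp_eq_zero_iff q c (h⁻¹ q)).2 (by rw [b2, hq1'])
              have : gp q c q₀ = 0 := by
                have hmin := gp_min hX q c q₀ (h⁻¹ q)
                rw [zqc] at hmin
                rcases min_le_iff.1 hmin with hcr | hcr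
                · exact le_antisymm hcr (gp_nonneg _ _ _)
                · exfalso; linarith
              have e := (gp_eq_zero_iff q c q₀).1 this
              show (dist q₀ c + dist q c - dist q₀ q)/2 = dist c q
              have c1 := dist_comm q₀ c
              have c2 := dist_comm q c
              have c3 := dist_comm q₀ q
              linarith
        rw [hval]; exact hDpos
      have zgq : gp c q (g c) = 0 := gp_step hX c q₀ q (g c) zpos zq0g
      have zgq' : gp c q (g⁻¹ c) = 0 := gp_step hX c q₀ q (g⁻¹ c) zpos zq0g'
      have zhq : 0 < gp c q (h q) := by
        show 0 < (dist q c + dist (h q) c - dist q (h q))/2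
        have c1 : dist (h q) c = dist c q + translationLength h := by rw [dist_comm]; exact b1
        have c2 := dist_comm q c
        linarith [hqax]
      have zhq' : 0 < gp c q (h⁻¹ q) := by
        show 0 < (dist q c + dist (h⁻¹ q) c - dist q (h⁻¹ q))/2
        have c1 : dist (h⁻¹ q) c = dist c q + translationLength h := by rw [dist_comm]; exact b2
        have c2 := dist_comm q c
        linarith [hq1']
      refine ⟨true, true, ?_, ?_, ?_⟩
      · exact (gp_comm c (h q) (g c)) ▸ gp_step hX c q (h q) (g c) zhq zgq
      · exact (gp_comm c (h q) (g⁻¹ c)) ▸ gp_step hX c q (h q) (g⁻¹ c) zhq zgq'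
      · exact (gp_comm c (h⁻¹ q) (g c)) ▸ gp_step hX c q (h⁻¹ q) (g c) zhq' zgq
  obtain ⟨ε, δ, hα, hβ, hγ⟩ := sel
  refine ⟨ε, δ, ?_⟩
  -- transported facts for g' := cond ε g g⁻¹ and h' := cond δ h h⁻¹
  have hg'ax : dist c ((cond ε g g⁻¹) c) = translationLength g := by
    cases ε
    · exact gc1'
    · exact hcax
  have hh'ax : dist q ((cond δ h h⁻¹) q) = translationLength h := by
    cases δ
    · exact hq1'
    · exact hqax
  have htlg' : translationLength (cond ε g g⁻¹) = translationLength g := by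
    cases ε
    · exact tl_inv g
    · rfl
  have htlh' : translationLength (cond δ h h⁻¹) = translationLength h := by
    cases δ
    · exact tl_inv h
    · rfl
  have hg'pos : 0 < translationLength (cond ε g g⁻¹) := by rw [htlg']; exact hlg
  have hh'pos : 0 < translationLength (cond δ h h⁻¹) := by rw [htlh']; exact hlh
  obtain ⟨C1', C2, C2', C3, Cmid⟩ :=
    chain_facts hX (cond ε g g⁻¹) hg'pos (by rw [htlg']; exact hg'ax)
  rw [htlg'] at C1' C2 C2' C3 Cmid
  obtain ⟨Q1', Q2, Q2', Q3, Qmid⟩ :=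
    chain_facts hX (cond δ h h⁻¹) hh'pos (by rw [htlh']; exact hh'ax)
  rw [htlh'] at Q1' Q2 Q2' Q3 Qmid
  have E1 : dist c ((cond δ h h⁻¹) q) = dist c q + translationLength h := by
    cases δ
    · exact b2
    · exact b1
  have E2 : dist c ((cond δ h h⁻¹)⁻¹ q) = dist c q + translationLength h := by
    cases δ
    · show dist c ((h⁻¹)⁻¹ q) = _
      rw [inv_inv]; exact b1
    · exact b2
  have E3 : dist c ((cond δ h h⁻¹)⁻¹ ((cond δ h h⁻¹)⁻¹ q)) = dist c q + 2 * translationLength h := by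
    cases δ
    · show dist c ((h⁻¹)⁻¹ ((h⁻¹)⁻¹ q)) = _
      rw [inv_inv]; exact b3
    · exact b4
  -- the three separation distances
  have S1 : dist ((cond ε g g⁻¹) c) ((cond δ h h⁻¹) q)
      = translationLength g + dist c q + translationLength h := by
    have e := (gp_eq_zero_iff c _ _).1 hα
    rw [e, dist_comm ((cond ε g g⁻¹) c) c, hg'ax, E1]
    ring
  have hstep2 : 0 < gp c ((cond ε g g⁻¹)⁻¹ c) ((cond ε g g⁻¹)⁻¹ ((cond ε g g⁻¹)⁻¹ c)) := by
    show 0 < (dist ((cond ε g g⁻¹)⁻¹ c) c + dist ((cond ε g g⁻¹)⁻¹ ((cond ε g g⁻¹)⁻¹ c)) c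
      - dist ((cond ε g g⁻¹)⁻¹ c) ((cond ε g g⁻¹)⁻¹ ((cond ε g g⁻¹)⁻¹ c)))/2
    have j1 : dist ((cond ε g g⁻¹)⁻¹ c) c = translationLength g := by rw [dist_comm]; exact C1'
    have j2 : dist ((cond ε g g⁻¹)⁻¹ ((cond ε g g⁻¹)⁻¹ c)) c = 2 * translationLength g := by
      rw [dist_comm]; exact C2'
    have j3 : dist ((cond ε g g⁻¹)⁻¹ c) ((cond ε g g⁻¹)⁻¹ ((cond ε g g⁻¹)⁻¹ c))
        = translationLength g := by
      rw [(cond ε g g⁻¹)⁻¹.dist_eq c ((cond ε g g⁻¹)⁻¹ c)]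
      exact C1'
    rw [j1, j2, j3]
    linarith
  have hβ2 : gp c ((cond ε g g⁻¹)⁻¹ ((cond ε g g⁻¹)⁻¹ c)) ((cond δ h h⁻¹) q) = 0 :=
    gp_step hX c ((cond ε g g⁻¹)⁻¹ c) ((cond ε g g⁻¹)⁻¹ ((cond ε g g⁻¹)⁻¹ c))
      ((cond δ h h⁻¹) q) hstep2 hβ
  have S2 : dist ((cond ε g g⁻¹)⁻¹ ((cond ε g g⁻¹)⁻¹ c)) ((cond δ h h⁻¹) q)
      = 2 * translationLength g + dist c q + translationLength h := by
    have e := (gp_eq_zero_iff c _ _).1 hβ2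
    rw [e, dist_comm _ c, C2', E1]
    ring
  have hstep3 : 0 < gp c ((cond δ h h⁻¹)⁻¹ q) ((cond δ h h⁻¹)⁻¹ ((cond δ h h⁻¹)⁻¹ q)) := by
    show 0 < (dist ((cond δ h h⁻¹)⁻¹ q) c + dist ((cond δ h h⁻¹)⁻¹ ((cond δ h h⁻¹)⁻¹ q)) c
      - dist ((cond δ h h⁻¹)⁻¹ q) ((cond δ h h⁻¹)⁻¹ ((cond δ h h⁻¹)⁻¹ q)))/2
    have j1 : dist ((cond δ h h⁻¹)⁻¹ q) c = dist c q + translationLength h := by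
      rw [dist_comm]; exact E2
    have j2 : dist ((cond δ h h⁻¹)⁻¹ ((cond δ h h⁻¹)⁻¹ q)) c
        = dist c q + 2 * translationLength h := by rw [dist_comm]; exact E3
    have j3 : dist ((cond δ h h⁻¹)⁻¹ q) ((cond δ h h⁻¹)⁻¹ ((cond δ h h⁻¹)⁻¹ q))
        = translationLength h := by
      rw [(cond δ h h⁻¹)⁻¹.dist_eq q ((cond δ h h⁻¹)⁻¹ q)]
      exact Q1'
    rw [j1, j2, j3]
    linarith [dist_nonneg (x := c) (y := q)]
  have hγ2 : gp c ((cond ε g g⁻¹) c) ((cond δ h h⁻¹)⁻¹ ((cond δ h h⁻¹)⁻¹ q)) = 0 := by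
    have := gp_step hX c ((cond δ h h⁻¹)⁻¹ q) ((cond δ h h⁻¹)⁻¹ ((cond δ h h⁻¹)⁻¹ q))
      ((cond ε g g⁻¹) c) hstep3 ((gp_comm c _ _) ▸ hγ)
    exact (gp_comm c _ _) ▸ this
  have S3 : dist ((cond ε g g⁻¹) c) ((cond δ h h⁻¹)⁻¹ ((cond δ h h⁻¹)⁻¹ q))
      = translationLength g + dist c q + 2 * translationLength h := by
    have e := (gp_eq_zero_iff c _ _).1 hγ2
    rw [e, dist_comm _ c, hg'ax, E3]
    ring
  exact geom hX (cond ε g g⁻¹) (cond δ h h⁻¹) hlg hlh c q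
    hg'ax C1' C2' C3 Cmid hh'ax Q1' Q2' Q3 Qmid E1 E2 E3 S1 S2 S3

lemma fg_swap (a b : X ≃ᵢ X)
    (hinj : Function.Injective ⇑(FreeSemigroup.lift ![a, b])) :
    Function.Injective ⇑(FreeSemigroup.lift ![b, a]) := by
  classical
  set σ : Fin 2 → Fin 2 := ![1, 0] with hσ
  have hσσ : ∀ i : Fin 2, σ (σ i) = i := by decide
  have hmapinv : ∀ w : FreeSemigroup (Fin 2),
      FreeSemigroup.map σ (FreeSemigroup.map σ w) = w := by
    intro w
    induction w using FreeSemigroup.recOnMul with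
    | ih1 i => rw [FreeSemigroup.map_of, FreeSemigroup.map_of, hσσ]
    | ih2 x y ihx ihy => rw [map_mul, map_mul, ihx, ihy]
  have hpt : ∀ w : FreeSemigroup (Fin 2),
      FreeSemigroup.lift ![b, a] w = FreeSemigroup.lift ![a, b] (FreeSemigroup.map σ w) := by
    intro w
    induction w using FreeSemigroup.recOnMul with
    | ih1 i =>
      rw [FreeSemigroup.map_of, FreeSemigroup.lift_of, FreeSemigroup.lift_of]
      fin_cases i <;> rfl
    | ih2 x y ihx ihy => rw [map_mul, map_mul, map_mul, ihx, ihy]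
  intro u v huv
  rw [hpt u, hpt v] at huv
  have := hinj huv
  have h2 : FreeSemigroup.map σ (FreeSemigroup.map σ u)
      = FreeSemigroup.map σ (FreeSemigroup.map σ v) := by rw [this]
  rwa [hmapinv, hmapinv] at h2

section conj
variable [Nonempty X]

lemma conj_pointwise (g s : X ≃ᵢ X) (x : X) :
    dist x ((s * g * s⁻¹) x) = dist (s⁻¹ x) (g (s⁻¹ x)) := by
  have e1 : (s * g * s⁻¹) x = s (g (s⁻¹ x)) := rfl
  rw [e1, ← s.dist_eq (s⁻¹ x) (g (s⁻¹ x))]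
  congr 1
  simp

lemma tl_conj (g s : X ≃ᵢ X) :
    translationLength (s * g * s⁻¹) = translationLength g := by
  have hbdd : ∀ k : X ≃ᵢ X, BddBelow (Set.range fun x => dist x (k x)) :=
    fun k => ⟨0, Set.forall_mem_range.2 fun _ => dist_nonneg⟩
  apply le_antisymm
  · apply le_ciInf
    intro y
    have h1 : translationLength (s * g * s⁻¹) ≤ dist (s y) ((s * g * s⁻¹) (s y)) :=
      ciInf_le (hbdd _) (s y)
    rw [conj_pointwise] at h1
    have e : s⁻¹ (s y) = y := s.symm_apply_apply y
    rwa [e] at h1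
  · apply le_ciInf
    intro x
    rw [conj_pointwise]
    exact ciInf_le (hbdd _) (s⁻¹ x)

lemma axis_conj (g s : X ≃ᵢ X) : axisOf (s * g * s⁻¹) = s '' axisOf g := by
  ext x
  simp only [axisOf, Set.mem_setOf_eq, Set.mem_image]
  rw [conj_pointwise, tl_conj]
  constructor
  · intro hx
    exact ⟨s⁻¹ x, hx, by simp⟩
  · rintro ⟨y, hy, rfl⟩
    have e : s⁻¹ (s y) = y := s.symm_apply_apply y
    rw [e]
    exact hy

lemma hyp_conj {g : X ≃ᵢ X} (s : X ≃ᵢ X) (hg : IsHyperbolicIsometry g) :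
    IsHyperbolicIsometry (s * g * s⁻¹) := by
  obtain ⟨hpos, x, hx⟩ := hg
  refine ⟨by rw [tl_conj]; exact hpos, ⟨s x, ?_⟩⟩
  rw [conj_pointwise, tl_conj]
  have e : s⁻¹ (s x) = x := s.symm_apply_apply x
  rw [e]
  exact hx

end conj
end proj
end RT


theorem conjugate_hyperbolic_distinct_axes {X : Type*} [MetricSpace X] [Nonempty X]
    (hX : IsRTree X) (g s : X ≃ᵢ X) (hg : IsHyperbolicIsometry g)
    (hs : s '' (axisOf g) ≠ axisOf g) :
    IsHyperbolicIsometry (s * g * s⁻¹) ∧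
    axisOf (s * g * s⁻¹) = s '' (axisOf g) ∧
    axisOf (s * g * s⁻¹) ≠ axisOf g ∧
    ∃ ε₁ ε₂ : Bool,
      FreelyGenerateFreeSemigroup (cond ε₁ g g⁻¹)
        (cond ε₂ (s * g * s⁻¹) (s * g * s⁻¹)⁻¹) := by
  have hconj := RT.hyp_conj s hg
  have haxis := RT.axis_conj g s
  have hne : axisOf (s * g * s⁻¹) ≠ axisOf g := by rw [haxis]; exact hs
  refine ⟨hconj, haxis, hne, ?_⟩
  by_cases hex : ∃ x, x ∈ axisOf (s * g * s⁻¹) ∧ x ∉ axisOf g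
  · obtain ⟨ε, δ, hinj⟩ := RT.main_pp hX g (s * g * s⁻¹) hg hconj hex
    exact ⟨ε, δ, hinj⟩
  · push_neg at hex
    have hex2 : ∃ x, x ∈ axisOf g ∧ x ∉ axisOf (s * g * s⁻¹) := by
      by_contra h2
      push_neg at h2
      exact hne (Set.Subset.antisymm (fun x hx => hex x hx) (fun x hx => h2 x hx))
    obtain ⟨ε, δ, hinj⟩ := RT.main_pp hX (s * g * s⁻¹) g hconj hg hex2
    exact ⟨δ, ε, RT.fg_swap _ _ hinj⟩
end
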